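/- arXiv:math-ph/0110029 — 5 statements merged into one kernel-verified Lean document; each statement's English description precedes it below -/
import Mathlib

section
/- Define G(x) = ∫_{h₀⁴}^x ds / g(4/s) for x ≥ h₀⁴, where g is the smooth positive left maximal solution on [0, 4/h₀⁴] of (1 − (3/4)z g − z² g') g = 1 with g(0)=1. Then for every n ≥ 1, G(x) = x − 3 ln x + c − 4 Σ_{k=1}^{n} (β_{k+1}/k)(4/x)^k + O(x^{−n−1}) as x → ∞, where c = ∫_{h₀⁴}^∞ (1/g(4/s) − 1 + 3/s) ds − h₀⁴ + 3 ln(h₀⁴) and β_k are defined by β₀ = 1, β_{n+1} = (n − 3/4)β_n + Σ_{j+k=n+1} β_j β_k − Σ_{j+k+ℓ=n+1} β_j β_k β_ℓ. -/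
open Set Filter Finset MeasureTheory

private lemma aux_c0 {N : ℕ} (hN : 0 < N) {c : ℕ → ℝ} {C δ : ℝ} (hδ : 0 < δ) {M : ℕ}
    (h : ∀ z ∈ Ioc (0:ℝ) δ, |∑ k ∈ range N, c k * z ^ k| ≤ C * z ^ M) (hM : 0 < M) :
    c 0 = 0 := by
  have hval : ∑ k ∈ range N, c k * (0:ℝ) ^ k = c 0 := by
    rw [Finset.sum_eq_single 0]
    · simp
    · intro b _ hb
      simp [zero_pow hb]
    · intro hb
      exact absurd (Finset.mem_range.2 hN) hb
  have h1 : Tendsto (fun z : ℝ => |∑ k ∈ range N, c k * z ^ k|)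
      (nhdsWithin 0 (Ioi 0)) (nhds |c 0|) := by
    have hcont : Continuous fun z : ℝ => |∑ k ∈ range N, c k * z ^ k| := by
      exact (continuous_finset_sum _ fun k _ => (continuous_const.mul (continuous_pow k))).abs
    have := hcont.tendsto 0
    rw [hval] at this
    exact this.mono_left nhdsWithin_le_nhds
  have h2 : Tendsto (fun z : ℝ => C * z ^ M) (nhdsWithin 0 (Ioi 0)) (nhds 0) := by
    have hcont : Continuous fun z : ℝ => C * z ^ M := by fun_prop
    have := hcont.tendsto 0
    rw [show C * (0:ℝ) ^ M = 0 by simp [zero_pow hM.ne']] at this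
    exact this.mono_left nhdsWithin_le_nhds
  have hle : |c 0| ≤ 0 := by
    refine le_of_tendsto_of_tendsto h1 h2 ?_
    filter_upwards [Ioc_mem_nhdsGT_of_mem (by exact ⟨le_refl _, hδ⟩ : (0:ℝ) ∈ Ico 0 δ)] with z hz
    exact h z hz
  exact abs_eq_zero.1 (le_antisymm hle (abs_nonneg _))

private lemma aux_coeff_zero : ∀ (m N : ℕ) (c : ℕ → ℝ) (C δ : ℝ), 0 < δ →
    (∀ z ∈ Ioc (0:ℝ) δ, |∑ k ∈ range N, c k * z ^ k| ≤ C * z ^ (m + 1)) →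
    ∀ k, k ≤ m → k < N → c k = 0 := by
  intro m
  induction m with
  | zero =>
    intro N c C δ hδ h k hk hkN
    interval_cases k
    exact aux_c0 (by omega : 0 < N) hδ h Nat.one_pos
  | succ m ih =>
    intro N c C δ hδ h k hk hkN
    have hN : 0 < N := Nat.pos_of_ne_zero (by omega)
    have hc0 : c 0 = 0 := aux_c0 hN hδ h (Nat.succ_pos _)
    match k with
    | 0 => exact hc0
    | k + 1 =>
      obtain ⟨N', rfl⟩ : ∃ N', N = N' + 1 := ⟨N - 1, by omega⟩
      have hshift : ∀ z ∈ Ioc (0:ℝ) δ,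
          |∑ j ∈ range N', c (j + 1) * z ^ j| ≤ C * z ^ (m + 1) := by
        intro z hz
        have hzpos : 0 < z := hz.1
        have heq : ∑ j ∈ range (N' + 1), c j * z ^ j
            = z * ∑ j ∈ range N', c (j + 1) * z ^ j := by
          rw [Finset.sum_range_succ' (fun j => c j * z ^ j), hc0, Finset.mul_sum]
          simp [pow_succ]
          ring_nf
          apply Finset.sum_congr rfl
          intro j _
          ring
        have := h z hz
        rw [heq, abs_mul, abs_of_pos hzpos] at this
        have h2 : z * |∑ j ∈ range N', c (j + 1) * z ^ j| ≤ z * (C * z ^ (m + 1)) := by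
          calc z * |∑ j ∈ range N', c (j + 1) * z ^ j| ≤ C * z ^ (m + 1 + 1) := this
          _ = z * (C * z ^ (m + 1)) := by ring
        exact le_of_mul_le_mul_left h2 hzpos
      exact ih N' (fun j => c (j + 1)) C δ hδ hshift k (by omega) (by omega)

private lemma inner_eval (f : ℕ → ℝ) (M r : ℕ) :
    ∑ l ∈ range M, (if l = r then f l else 0) = if r < M then f r else 0 := by
  rw [Finset.sum_ite_eq' (range M) r f]
  simp [Finset.mem_range]

private lemma double_small (b : ℕ → ℝ) (m r : ℕ) (hr : r ≤ m) :
    ∑ k ∈ range (m+1), ∑ l ∈ range (m+1), (if k + l = r then b k * b l else 0)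
      = ∑ u ∈ range (r+1), b u * b (r - u) := by
  have h1 : ∀ k ∈ range (m+1), (∑ l ∈ range (m+1), if k + l = r then b k * b l else 0)
      = if k ≤ r then b k * b (r - k) else 0 := by
    intro k _
    rcases le_or_gt k r with h | h
    · have e1 : (∑ l ∈ range (m+1), if k + l = r then b k * b l else 0)
          = ∑ l ∈ range (m+1), if l = r - k then (fun l => b k * b l) l else 0 :=
        Finset.sum_congr rfl fun l _ => if_congr (by omega) rfl rfl
      rw [e1, inner_eval (fun l => b k * b l) (m+1) (r-k), if_pos (by omega), if_pos h]
    · rw [Finset.sum_eq_zero fun l _ => by rw [if_neg (by omega)], if_neg (not_le.2 h)]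
  rw [Finset.sum_congr rfl h1,
    ← Finset.sum_subset (Finset.range_subset_range.2 (by omega : r + 1 ≤ m + 1))
      (fun u _ hu => by rw [if_neg (by simp only [Finset.mem_range] at hu; omega)])]
  exact Finset.sum_congr rfl fun u hu =>
    if_pos (by simpa [Nat.lt_succ_iff] using Finset.mem_range.1 hu)

private lemma double_top (b : ℕ → ℝ) (m : ℕ) :
    ∑ k ∈ range (m+1), ∑ l ∈ range (m+1), (if k + l = m + 1 then b k * b l else 0)
      = (∑ u ∈ range (m+2), b u * b (m+1-u)) - 2 * (b 0 * b (m+1)) := by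
  have h1 : ∀ k ∈ range (m+1), (∑ l ∈ range (m+1), if k + l = m+1 then b k * b l else 0)
      = if k = 0 then 0 else b k * b (m+1-k) := by
    intro k hk
    have hk' := Finset.mem_range.1 hk
    rcases Nat.eq_zero_or_pos k with rfl | hpos
    · rw [if_pos rfl, Finset.sum_eq_zero fun l hl => by
        rw [if_neg (by have := Finset.mem_range.1 hl; omega)]]
    · have e1 : (∑ l ∈ range (m+1), if k + l = m+1 then b k * b l else 0)
          = ∑ l ∈ range (m+1), if l = m+1-k then (fun l => b k * b l) l else 0 :=
        Finset.sum_congr rfl fun l _ => if_congr (by omega) rfl rfl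
      rw [e1, inner_eval (fun l => b k * b l) (m+1) (m+1-k), if_pos (by omega), if_neg (by omega)]
  rw [Finset.sum_congr rfl h1,
    Finset.sum_range_succ' (fun k => if k = 0 then 0 else b k * b (m+1-k)) m,
    Finset.sum_range_succ (fun u => b u * b (m+1-u)) (m+1),
    Finset.sum_range_succ' (fun u => b u * b (m+1-u)) m]
  simp only [Nat.succ_ne_zero, if_neg, if_pos, Nat.sub_zero, Nat.sub_self, reduceIte]
  ring

private lemma triple_top (b : ℕ → ℝ) (hb0 : b 0 = 1) (m : ℕ) :
    ∑ j ∈ range (m+1), ∑ k ∈ range (m+1), ∑ l ∈ range (m+1),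
        (if j + k + l = m + 1 then b j * b k * b l else 0)
      = (∑ i ∈ range (m+2), b i * (∑ u ∈ range (m+1-i+1), b u * b (m+1-i-u)))
        - 3 * b (m+1) := by
  have h1 : ∀ j ∈ range (m+1),
      (∑ k ∈ range (m+1), ∑ l ∈ range (m+1), if j + k + l = m+1 then b j * b k * b l else 0)
      = b j * (∑ k ∈ range (m+1), ∑ l ∈ range (m+1),
          if k + l = m+1-j then b k * b l else 0) := by
    intro j hj
    have hj' := Finset.mem_range.1 hj
    rw [Finset.mul_sum]
    refine Finset.sum_congr rfl fun k _ => ?_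
    rw [Finset.mul_sum]
    refine Finset.sum_congr rfl fun l _ => ?_
    have he : (j + k + l = m + 1) ↔ (k + l = m + 1 - j) := by omega
    simp only [he]
    split <;> ring
  rw [Finset.sum_congr rfl h1,
    Finset.sum_range_succ' (fun j => b j * (∑ k ∈ range (m+1), ∑ l ∈ range (m+1),
      if k + l = m+1-j then b k * b l else 0)) m,
    Finset.sum_range_succ (fun i => b i * (∑ u ∈ range (m+1-i+1), b u * b (m+1-i-u))) (m+1),
    Finset.sum_range_succ' (fun i => b i * (∑ u ∈ range (m+1-i+1), b u * b (m+1-i-u))) m]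
  have h2 : ∀ j ∈ range m,
      b (j+1) * (∑ k ∈ range (m+1), ∑ l ∈ range (m+1),
        if k + l = m+1-(j+1) then b k * b l else 0)
      = b (j+1) * (∑ u ∈ range (m+1-(j+1)+1), b u * b (m+1-(j+1)-u)) := by
    intro j hj
    rw [double_small b m (m+1-(j+1)) (by omega)]
  rw [Finset.sum_congr rfl h2]
  have h3 : m + 1 - 0 = m + 1 := rfl
  rw [h3, double_top b m]
  have h5 : (∑ u ∈ range (m+1-(m+1)+1), b u * b (m+1-(m+1)-u)) = 1 := by
    simp [hb0]
  rw [h5]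
  simp only [hb0, show m+1+1 = m+2 from rfl]
  ring

open Polynomial in
private lemma pol_coeff (b : ℕ → ℝ) (N k : ℕ) :
    (∑ j ∈ range N, C (b j) * X ^ j : ℝ[X]).coeff k = if k < N then b k else 0 := by
  rw [Polynomial.finset_sum_coeff]
  simp only [Polynomial.coeff_C_mul, Polynomial.coeff_X_pow, mul_ite, mul_one, mul_zero]
  rw [Finset.sum_ite_eq (range N) k b]
  simp [Finset.mem_range]

open Polynomial in
private lemma pol_eval (b : ℕ → ℝ) (N : ℕ) (z : ℝ) :
    (∑ j ∈ range N, C (b j) * X ^ j : ℝ[X]).eval z = ∑ j ∈ range N, b j * z ^ j := by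
  rw [Polynomial.eval_finset_sum]
  simp

open Polynomial in
private lemma key_alg (b : ℕ → ℝ) (hb0 : b 0 = 1) (m N : ℕ) (hN : m + 2 ≤ N) :
    ((∑ k ∈ range N, C (b k) * X ^ k : ℝ[X]) ^ 3 - (∑ k ∈ range N, C (b k) * X ^ k) ^ 2
      + C (3/4 : ℝ) * X * (∑ k ∈ range N, C (b k) * X ^ k)
      - X ^ 2 * derivative (∑ k ∈ range N, C (b k) * X ^ k)).coeff (m+1)
    = ((∑ j ∈ range (m+1), ∑ k ∈ range (m+1), ∑ l ∈ range (m+1),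
        (if j + k + l = m + 1 then b j * b k * b l else 0))
      - (∑ j ∈ range (m+1), ∑ k ∈ range (m+1), (if j + k = m + 1 then b j * b k else 0))
      + b (m+1) + (3/4) * b m - (m : ℝ) * b m) := by
  set p : ℝ[X] := ∑ k ∈ range N, C (b k) * X ^ k with hp
  have hco : ∀ k, p.coeff k = if k < N then b k else 0 := pol_coeff b N
  have hsq : ∀ r, r ≤ m + 1 → (p ^ 2).coeff r = ∑ u ∈ range (r+1), b u * b (r-u) := by
    intro r hr
    rw [sq, Polynomial.coeff_mul, Finset.Nat.sum_antidiagonal_eq_sum_range_succ_mk]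
    refine Finset.sum_congr rfl fun u hu => ?_
    have hu' := Finset.mem_range.1 hu
    rw [hco, hco, if_pos (by omega), if_pos (by omega)]
  have hcube : (p ^ 3).coeff (m+1)
      = ∑ i ∈ range (m+2), b i * (∑ u ∈ range (m+1-i+1), b u * b (m+1-i-u)) := by
    rw [show p ^ 3 = p * p ^ 2 by ring, Polynomial.coeff_mul,
      Finset.Nat.sum_antidiagonal_eq_sum_range_succ_mk]
    refine Finset.sum_congr rfl fun i hi => ?_
    have hi' := Finset.mem_range.1 hi
    rw [hco, if_pos (by omega), hsq (m+1-i) (by omega)]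
  have hlin : (C (3/4 : ℝ) * X * p).coeff (m+1) = (3/4) * b m := by
    rw [mul_assoc, Polynomial.coeff_C_mul, show (X : ℝ[X]) * p = X ^ 1 * p by rw [pow_one],
      Polynomial.coeff_X_pow_mul p 1 m, hco, if_pos (by omega)]
  have hder : (X ^ 2 * derivative p).coeff (m+1) = (m : ℝ) * b m := by
    rcases m with _ | s
    · rw [Polynomial.coeff_X_pow_mul' (derivative p) 2 1]
      norm_num
    · rw [show s + 1 + 1 = s + 2 from rfl,
        Polynomial.coeff_X_pow_mul (derivative p) 2 s,
        Polynomial.coeff_derivative, hco, if_pos (by omega)]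
      push_cast
      ring
  rw [Polynomial.coeff_sub, Polynomial.coeff_add, Polynomial.coeff_sub, hcube,
    hsq (m+1) le_rfl, hlin, hder, triple_top b hb0 m, double_top b m, hb0]
  simp only [show m+1+1 = m+2 from rfl]
  ring

private lemma abs5 (x1 x2 x3 x4 x5 : ℝ) :
    |x1 - x2 + x3 - x4 + x5| ≤ |x1| + |x2| + |x3| + |x4| + |x5| := by
  have h4 : |x1 - x2| ≤ |x1| + |x2| := by
    calc |x1 - x2| = |x1 + -x2| := by rw [sub_eq_add_neg]
    _ ≤ |x1| + |-x2| := abs_add_le _ _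
    _ = |x1| + |x2| := by rw [abs_neg]
  have h3 : |x1 - x2 + x3| ≤ |x1 - x2| + |x3| := abs_add_le _ _
  have h2 : |x1 - x2 + x3 - x4| ≤ |x1 - x2 + x3| + |x4| := by
    calc |x1 - x2 + x3 - x4| = |x1 - x2 + x3 + -x4| := by rw [sub_eq_add_neg]
    _ ≤ |x1 - x2 + x3| + |-x4| := abs_add_le _ _
    _ = _ := by rw [abs_neg]
  have h1 : |x1 - x2 + x3 - x4 + x5| ≤ |x1 - x2 + x3 - x4| + |x5| := abs_add_le _ _
  linarith

/-- Taylor coefficient of `f` at `0` relative to `Icc 0 Z`. -/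
noncomputable def tc (f : ℝ → ℝ) (Z : ℝ) (k : ℕ) : ℝ :=
  (k.factorial : ℝ)⁻¹ * iteratedDerivWithin k f (Icc 0 Z) 0

private lemma taylor_bound {Z : ℝ} (hZ : 0 < Z) {f : ℝ → ℝ}
    (hf : ContDiffOn ℝ (⊤ : ℕ∞) f (Icc 0 Z)) (m : ℕ) :
    ∃ C, ∀ z ∈ Icc (0:ℝ) Z, |f z - ∑ k ∈ range (m+1), tc f Z k * z ^ k| ≤ C * z ^ (m+1) := by
  obtain ⟨C, hC⟩ := exists_taylor_mean_remainder_bound hZ.le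
    (hf.of_le (by exact_mod_cast le_top) : ContDiffOn ℝ (m+1) f (Icc 0 Z))
  refine ⟨C, fun z hz => ?_⟩
  have h := hC z hz
  rw [taylor_within_apply] at h
  have he : ∑ k ∈ range (m+1), ((k.factorial : ℝ)⁻¹ * (z - 0) ^ k) •
      iteratedDerivWithin k f (Icc 0 Z) 0 = ∑ k ∈ range (m+1), tc f Z k * z ^ k := by
    refine Finset.sum_congr rfl fun k _ => ?_
    rw [smul_eq_mul, sub_zero]
    simp only [tc]
    ring
  rw [he, Real.norm_eq_abs, sub_zero] at h
  exact h

open Polynomial in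
set_option maxHeartbeats 1000000 in
private lemma coeff_eq_beta {Z : ℝ} (hZ : 0 < Z) {f : ℝ → ℝ}
    (hf : ContDiffOn ℝ (⊤ : ℕ∞) f (Icc 0 Z)) (hf0 : f 0 = 1)
    (hode : ∀ z ∈ Ioo (0:ℝ) Z, z ^ 2 * deriv f z = f z ^ 3 - f z ^ 2 + 3/4 * z * f z)
    (β : ℕ → ℝ) (hβ0 : β 0 = 1)
    (hβrec : ∀ n : ℕ, β (n + 1) =
      ((n : ℝ) - 3 / 4) * β n +
      (∑ j ∈ range (n + 1), ∑ k ∈ range (n + 1),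
        if j + k = n + 1 then β j * β k else 0) -
      (∑ j ∈ range (n + 1), ∑ k ∈ range (n + 1), ∑ l ∈ range (n + 1),
        if j + k + l = n + 1 then β j * β k * β l else 0)) :
    ∀ k, tc f Z k = β k := by
  have hU : UniqueDiffOn ℝ (Icc (0:ℝ) Z) := uniqueDiffOn_Icc hZ
  have h0mem : (0:ℝ) ∈ Icc (0:ℝ) Z := ⟨le_refl _, hZ.le⟩
  have ha0 : tc f Z 0 = 1 := by simp [tc, iteratedDerivWithin_zero, hf0]
  set f' : ℝ → ℝ := derivWithin f (Icc 0 Z) with hf'def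
  have hf'C : ContDiffOn ℝ (⊤ : ℕ∞) f' (Icc 0 Z) := hf.derivWithin hU (by simp)
  have ha' : ∀ k, tc f' Z k = (k+1 : ℝ) * tc f Z (k+1) := by
    intro k
    have hh : iteratedDerivWithin k f' (Icc 0 Z) 0 = iteratedDerivWithin (k+1) f (Icc 0 Z) 0 :=
      (congrFun iteratedDerivWithin_succ' 0).symm
    simp only [tc]
    rw [hh, Nat.factorial_succ]
    have hk : (k.factorial : ℝ) ≠ 0 := Nat.cast_ne_zero.2 (Nat.factorial_ne_zero k)
    push_cast
    field_simp
  -- the recursion for the coefficients a := tc f Z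
  have key : ∀ m : ℕ, tc f Z (m+1) = ((m:ℝ) - 3/4) * tc f Z m
      + (∑ j ∈ range (m+1), ∑ k ∈ range (m+1),
          if j + k = m + 1 then tc f Z j * tc f Z k else 0)
      - (∑ j ∈ range (m+1), ∑ k ∈ range (m+1), ∑ l ∈ range (m+1),
          if j + k + l = m + 1 then tc f Z j * tc f Z k * tc f Z l else 0) := by
    intro m
    obtain ⟨C1, hC1⟩ := taylor_bound hZ hf (m+1)
    obtain ⟨C2, hC2⟩ := taylor_bound hZ hf'C (m+1)
    -- nonnegativity of C1, C2
    have hC1n : 0 ≤ C1 := by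
      have h1 := (abs_nonneg _).trans (hC1 Z ⟨hZ.le, le_refl _⟩)
      by_contra hcon
      push_neg at hcon
      nlinarith [pow_pos hZ (m+2)]
    have hC2n : 0 ≤ C2 := by
      have h1 := (abs_nonneg _).trans (hC2 Z ⟨hZ.le, le_refl _⟩)
      by_contra hcon
      push_neg at hcon
      nlinarith [pow_pos hZ (m+2)]
    set p : ℝ[X] := ∑ k ∈ range (m+2), C (tc f Z k) * X ^ k with hpdef
    have hdp : derivative p = ∑ k ∈ range (m+1), C (tc f' Z k) * X ^ k := by
      apply Polynomial.ext
      intro j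
      rw [Polynomial.coeff_derivative, hpdef, pol_coeff, pol_coeff]
      rcases lt_or_ge j (m+1) with h | h
      · rw [if_pos h, if_pos (by omega), ha' j]
        push_cast
        ring
      · rw [if_neg (by omega), if_neg (by omega), zero_mul]
    set qp : ℝ[X] := p ^ 3 - p ^ 2 + C (3/4 : ℝ) * X * p - X ^ 2 * derivative p with hqpdef
    -- bound |f| and |P| on the relevant region
    obtain ⟨Mf, hMf⟩ := (isCompact_Icc (a := (0:ℝ)) (b := Z)).exists_bound_of_continuousOn
      (hf.continuousOn)
    set B0 : ℝ := ∑ k ∈ range (m+2), |tc f Z k| with hB0def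
    set B : ℝ := max Mf B0 + 1 with hBdef
    have hBf : ∀ z ∈ Icc (0:ℝ) Z, |f z| ≤ B := by
      intro z hz
      have h1 := hMf z hz
      rw [Real.norm_eq_abs] at h1
      have h2 : Mf ≤ max Mf B0 := le_max_left _ _
      simp only [hBdef]
      linarith
    have hBP : ∀ z ∈ Icc (0:ℝ) (1:ℝ), |∑ k ∈ range (m+2), tc f Z k * z ^ k| ≤ B := by
      intro z hz
      have h1 : |∑ k ∈ range (m+2), tc f Z k * z ^ k| ≤ ∑ k ∈ range (m+2), |tc f Z k * z ^ k| :=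
        Finset.abs_sum_le_sum_abs _ _
      have h2 : ∑ k ∈ range (m+2), |tc f Z k * z ^ k| ≤ B0 := by
        rw [hB0def]
        refine Finset.sum_le_sum fun k _ => ?_
        rw [abs_mul]
        have hzk : |z ^ k| ≤ 1 := by
          rw [abs_pow]
          exact pow_le_one₀ (abs_nonneg z) (abs_le.2 ⟨by linarith [hz.1], hz.2⟩)
        nlinarith [abs_nonneg (tc f Z k)]
      have h3 : B0 ≤ B := by simp only [hBdef]; linarith [le_max_right Mf B0]
      linarith
    have hBn : 0 ≤ B := le_trans (abs_nonneg _) (hBP 0 ⟨le_refl _, zero_le_one⟩)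
    clear_value B0 B
    set δ : ℝ := min (Z/2) 1 with hδdef
    have hδpos : 0 < δ := lt_min (by linarith) zero_lt_one
    have hδ1 : δ ≤ 1 := min_le_right _ _
    have hδ2 : δ ≤ Z / 2 := min_le_left _ _
    clear_value δ
    have hbound : ∀ z ∈ Ioc (0:ℝ) δ, |qp.eval z| ≤
        (3*B^2*C1 + 2*B*C1 + C1 + C2 + |tc f' Z (m+1)|) * z ^ (m+2) := by
      intro z hz
      have hz0 : 0 < z := hz.1
      have hz1 : z ≤ 1 := le_trans hz.2 hδ1
      have hzZ : z < Z := lt_of_le_of_lt (le_trans hz.2 hδ2) (by linarith)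
      have hzIcc : z ∈ Icc (0:ℝ) Z := ⟨hz0.le, hzZ.le⟩
      have hzIoo : z ∈ Ioo (0:ℝ) Z := ⟨hz0, hzZ⟩
      set Pz : ℝ := ∑ k ∈ range (m+2), tc f Z k * z ^ k with hPzdef
      set Qz : ℝ := ∑ k ∈ range (m+2), tc f' Z k * z ^ k with hQzdef
      have hfP : |f z - Pz| ≤ C1 * z ^ (m+2) := hC1 z hzIcc
      have hfQ : |f' z - Qz| ≤ C2 * z ^ (m+2) := hC2 z hzIcc
      have hPzB : |Pz| ≤ B := hBP z ⟨hz0.le, hz1⟩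
      clear_value Pz Qz
      have hfz' : f' z = deriv f z := derivWithin_of_mem_nhds (Icc_mem_nhds hz0 hzZ)
      have hodez : z ^ 2 * f' z = f z ^ 3 - f z ^ 2 + 3/4 * z * f z := by
        rw [hfz']; exact hode z hzIoo
      have heval : qp.eval z = Pz ^ 3 - Pz ^ 2 + 3/4 * z * Pz
          - z ^ 2 * (Qz - tc f' Z (m+1) * z ^ (m+1)) := by
        have hQ' : (∑ k ∈ range (m+1), tc f' Z k * z ^ k)
            = Qz - tc f' Z (m+1) * z ^ (m+1) := by
          rw [hQzdef, Finset.sum_range_succ (fun k => tc f' Z k * z ^ k) (m+1)]; ring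
        rw [hqpdef]
        simp only [Polynomial.eval_sub, Polynomial.eval_add, Polynomial.eval_mul,
          Polynomial.eval_pow, Polynomial.eval_C, Polynomial.eval_X, hdp]
        rw [hpdef]
        simp only [pol_eval]
        rw [hQ', hPzdef]
      have hsplit : qp.eval z = (Pz ^ 3 - f z ^ 3) - (Pz ^ 2 - f z ^ 2)
          + 3/4 * z * (Pz - f z) - z ^ 2 * (Qz - f' z) + tc f' Z (m+1) * z ^ (m+3) := by
        rw [heval]
        linear_combination (-1 : ℝ) * hodez
      rw [hsplit]
      have hfzB : |f z| ≤ B := hBf z hzIcc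
      have hzp : (0:ℝ) ≤ z ^ (m+2) := le_of_lt (pow_pos hz0 _)
      have t1 : |Pz ^ 3 - f z ^ 3| ≤ (C1 * z ^ (m+2)) * (3 * B ^ 2) := by
        have e : Pz ^ 3 - f z ^ 3 = (Pz - f z) * (Pz ^ 2 + Pz * f z + f z ^ 2) := by ring
        rw [e, abs_mul, abs_sub_comm]
        have h1 : |Pz ^ 2 + Pz * f z + f z ^ 2| ≤ 3 * B ^ 2 := by
          have hA := abs_add_le (Pz ^ 2 + Pz * f z) (f z ^ 2)
          have hB2 := abs_add_le (Pz ^ 2) (Pz * f z)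
          have hm : |Pz * f z| ≤ B * B := by
            rw [abs_mul]; exact mul_le_mul hPzB hfzB (abs_nonneg _) hBn
          have hp2 : |Pz ^ 2| ≤ B ^ 2 := by rw [abs_pow]; exact pow_le_pow_left₀ (abs_nonneg _) hPzB 2
          have hf2 : |f z ^ 2| ≤ B ^ 2 := by rw [abs_pow]; exact pow_le_pow_left₀ (abs_nonneg _) hfzB 2
          nlinarith
        exact mul_le_mul hfP h1 (abs_nonneg _) (mul_nonneg hC1n hzp)
      have t2 : |Pz ^ 2 - f z ^ 2| ≤ (C1 * z ^ (m+2)) * (2 * B) := by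
        have e : Pz ^ 2 - f z ^ 2 = (Pz - f z) * (Pz + f z) := by ring
        rw [e, abs_mul, abs_sub_comm]
        have h1 : |Pz + f z| ≤ 2 * B := by
          have := abs_add_le Pz (f z)
          linarith
        exact mul_le_mul hfP h1 (abs_nonneg _) (mul_nonneg hC1n hzp)
      have t3 : |3/4 * z * (Pz - f z)| ≤ C1 * z ^ (m+2) := by
        rw [abs_mul, abs_sub_comm]
        have h1 : |3/4 * z| ≤ 1 := by
          rw [abs_of_pos (by linarith : (0:ℝ) < 3/4 * z)]
          linarith
        nlinarith [abs_nonneg (f z - Pz), hfP]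
      have t4 : |z ^ 2 * (Qz - f' z)| ≤ C2 * z ^ (m+2) := by
        rw [abs_mul, abs_sub_comm]
        have h1 : |z ^ 2| ≤ 1 := by
          rw [abs_pow]
          exact pow_le_one₀ (abs_nonneg z) (by rw [abs_of_pos hz0]; exact hz1)
        nlinarith [abs_nonneg (f' z - Qz), hfQ]
      have t5 : |tc f' Z (m+1) * z ^ (m+3)| ≤ |tc f' Z (m+1)| * z ^ (m+2) := by
        rw [abs_mul, abs_pow, abs_of_pos hz0]
        have : z ^ (m+3) ≤ z ^ (m+2) := pow_le_pow_of_le_one hz0.le hz1 (by omega)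
        nlinarith [abs_nonneg (tc f' Z (m+1))]
      have habs := abs5 (Pz ^ 3 - f z ^ 3) (Pz ^ 2 - f z ^ 2) (3/4 * z * (Pz - f z))
        (z ^ 2 * (Qz - f' z)) (tc f' Z (m+1) * z ^ (m+3))
      have hmid : |3/4 * z * (Pz - f z)| = |3/4 * z * (Pz - f z)| := rfl
      calc |(Pz ^ 3 - f z ^ 3) - (Pz ^ 2 - f z ^ 2) + 3/4 * z * (Pz - f z)
          - z ^ 2 * (Qz - f' z) + tc f' Z (m+1) * z ^ (m+3)|
          ≤ |Pz ^ 3 - f z ^ 3| + |Pz ^ 2 - f z ^ 2| + |3/4 * z * (Pz - f z)|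
            + |z ^ 2 * (Qz - f' z)| + |tc f' Z (m+1) * z ^ (m+3)| := habs
        _ ≤ (C1 * z ^ (m+2)) * (3 * B ^ 2) + (C1 * z ^ (m+2)) * (2 * B)
            + C1 * z ^ (m+2) + C2 * z ^ (m+2) + |tc f' Z (m+1)| * z ^ (m+2) := by
            linarith
        _ = (3*B^2*C1 + 2*B*C1 + C1 + C2 + |tc f' Z (m+1)|) * z ^ (m+2) := by ring
    -- extract coefficient vanishing
    have hcoeff0 : qp.coeff (m+1) = 0 := by
      rcases lt_or_ge (m+1) (qp.natDegree + 1) with h | h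
      · refine aux_coeff_zero (m+1) (qp.natDegree + 1) qp.coeff
          (3*B^2*C1 + 2*B*C1 + C1 + C2 + |tc f' Z (m+1)|) δ hδpos ?_ (m+1) (le_refl _) h
        intro z hz
        rw [← Polynomial.eval_eq_sum_range]
        exact hbound z hz
      · exact Polynomial.coeff_eq_zero_of_natDegree_lt (by omega)
    rw [hqpdef, hpdef] at hcoeff0
    rw [key_alg (tc f Z) ha0 m (m+2) (le_refl _)] at hcoeff0
    linarith
  -- strong induction: tc f Z = β
  have main : ∀ m : ℕ, ∀ k ≤ m, tc f Z k = β k := by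
    intro m
    induction m with
    | zero =>
      intro k hk
      interval_cases k
      rw [ha0, hβ0]
    | succ m ih =>
      intro k hk
      rcases Nat.lt_succ_iff_lt_or_eq.1 (Nat.lt_succ_of_le hk) with h | rfl
      · exact ih k (by omega)
      · rw [key m, hβrec m, ih m (le_refl _)]
        congr 1
        · congr 1
          refine Finset.sum_congr rfl fun j hj => Finset.sum_congr rfl fun l hl => ?_
          have hj' := Finset.mem_range.1 hj
          have hl' := Finset.mem_range.1 hl
          rw [ih j (by omega), ih l (by omega)]
        · refine Finset.sum_congr rfl fun j hj => Finset.sum_congr rfl fun l hl =>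
            Finset.sum_congr rfl fun i hi => ?_
          have hj' := Finset.mem_range.1 hj
          have hl' := Finset.mem_range.1 hl
          have hi' := Finset.mem_range.1 hi
          rw [ih j (by omega), ih l (by omega), ih i (by omega)]
  exact fun k => main k k (le_refl _)

set_option maxHeartbeats 1000000 in
/-- Asymptotics of `G(x) = ∫_{h₀⁴}^x ds / g(4/s)`: for every `n ≥ 1`,
`G(x) = x − 3 ln x + c − 4 Σ_{k=1}^n (β_{k+1}/k)(4/x)^k + O(x^{−n−1})` as
`x → ∞`, where `c = ∫_{h₀⁴}^∞ (1/g(4/s) − 1 + 3/s) ds − h₀⁴ + 3 ln(h₀⁴)` and the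
`β_k` satisfy the recursion of the inverse power series. -/
theorem stmt_15 (h₀ : ℝ) (hh₀ : 0 < h₀)
    (g : ℝ → ℝ) (hsmooth : ContDiffOn ℝ (⊤ : ℕ∞) g (Icc 0 (4 / h₀ ^ 4)))
    (h0 : g 0 = 1)
    (hpos : ∀ z ∈ Icc (0 : ℝ) (4 / h₀ ^ 4), 0 < g z)
    (hsol : ∀ z ∈ Ioc (0 : ℝ) (4 / h₀ ^ 4),
      (1 - 3 / 4 * z * g z - z ^ 2 * deriv g z) * g z = 1)
    (G : ℝ → ℝ)
    (hG : ∀ x : ℝ, h₀ ^ 4 ≤ x → G x = ∫ s in (h₀ ^ 4)..x, (g (4 / s))⁻¹)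
    (c : ℝ)
    (hc : c = (∫ s in Ioi (h₀ ^ 4), (1 / g (4 / s) - 1 + 3 / s))
        - h₀ ^ 4 + 3 * Real.log (h₀ ^ 4))
    (β : ℕ → ℝ) (hβ0 : β 0 = 1)
    (hβrec : ∀ n : ℕ, β (n + 1) =
      ((n : ℝ) - 3 / 4) * β n +
      (∑ j ∈ range (n + 1), ∑ k ∈ range (n + 1),
        if j + k = n + 1 then β j * β k else 0) -
      (∑ j ∈ range (n + 1), ∑ k ∈ range (n + 1), ∑ l ∈ range (n + 1),
        if j + k + l = n + 1 then β j * β k * β l else 0)) :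
    ∀ n : ℕ, 1 ≤ n →
      (fun x : ℝ => G x - (x - 3 * Real.log x + c
          - 4 * ∑ k ∈ Icc 1 n, β (k + 1) / k * (4 / x) ^ k))
        =O[atTop] (fun x : ℝ => x ^ (-(n : ℝ) - 1)) := by
  intro n hn
  have hA : (0:ℝ) < h₀ ^ 4 := pow_pos hh₀ 4
  set Z : ℝ := 4 / h₀ ^ 4 with hZdef
  have hZ : 0 < Z := by positivity
  set f : ℝ → ℝ := fun z => (g z)⁻¹ with hfdef
  have hgne : ∀ z ∈ Icc (0:ℝ) Z, g z ≠ 0 := fun z hz => (hpos z hz).ne'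
  have hfC : ContDiffOn ℝ (⊤ : ℕ∞) f (Icc 0 Z) := hsmooth.inv hgne
  have hf0 : f 0 = 1 := by rw [hfdef]; simp [h0]
  have hode : ∀ z ∈ Ioo (0:ℝ) Z, z ^ 2 * deriv f z = f z ^ 3 - f z ^ 2 + 3/4 * z * f z := by
    intro z hz
    have hzIcc : z ∈ Icc (0:ℝ) Z := ⟨hz.1.le, hz.2.le⟩
    have hgz : g z ≠ 0 := hgne z hzIcc
    have hg : DifferentiableAt ℝ g z :=
      ((hsmooth.differentiableOn (by simp)) z hzIcc).differentiableAt
        (Icc_mem_nhds hz.1 hz.2)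
    have hd : deriv f z = -deriv g z / g z ^ 2 := by
      rw [hfdef]; exact deriv_inv'' hg hgz
    have hGeq := hsol z ⟨hz.1, hz.2.le⟩
    have key : -(z ^ 2 * deriv g z) * g z = 1 - g z + 3/4 * z * g z ^ 2 := by
      linear_combination hGeq
    have hrhs : ((g z)⁻¹) ^ 3 - ((g z)⁻¹) ^ 2 + 3/4 * z * (g z)⁻¹
        = (1 - g z + 3/4 * z * g z ^ 2) / g z ^ 3 := by
      field_simp
    have hlhs : z ^ 2 * (-deriv g z / g z ^ 2) = (-(z ^ 2 * deriv g z) * g z) / g z ^ 3 := by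
      field_simp
    have hfz : ∀ y : ℝ, f y = (g y)⁻¹ := fun y => rfl
    rw [hfz, hd, hlhs, key, ← hrhs]
  have hβ := coeff_eq_beta hZ hfC hf0 hode β hβ0 hβrec
  have htay : ∀ m : ℕ, ∃ C, ∀ z ∈ Icc (0:ℝ) Z,
      |f z - ∑ k ∈ range (m+1), β k * z ^ k| ≤ C * z ^ (m+1) := by
    intro m
    obtain ⟨C, hC⟩ := taylor_bound hZ hfC m
    refine ⟨C, fun z hz => ?_⟩
    have h := hC z hz
    have he : ∑ k ∈ range (m+1), tc f Z k * z ^ k = ∑ k ∈ range (m+1), β k * z ^ k :=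
      Finset.sum_congr rfl fun k _ => by rw [hβ k]
    rwa [he] at h
  have hβ1 : β 1 = -(3/4) := by
    have h := hβrec 0
    simp [hβ0] at h
    linarith
  -- the correction function q
  set q : ℝ → ℝ := fun s => 1 / g (4 / s) - 1 + 3 / s with hqdef
  have hmem4 : ∀ s : ℝ, h₀ ^ 4 ≤ s → (4 / s ∈ Icc (0:ℝ) Z ∧ 0 < s) := by
    intro s hs
    have hs0 : 0 < s := lt_of_lt_of_le hA hs
    refine ⟨⟨by positivity, ?_⟩, hs0⟩
    rw [hZdef]
    exact div_le_div_of_nonneg_left (by norm_num) hA hs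
  have hqbound : ∀ m : ℕ, ∃ C, 0 ≤ C ∧ ∀ s, h₀ ^ 4 ≤ s →
      |q s - ∑ k ∈ Finset.Icc 2 (m+1), β k * (4 / s) ^ k| ≤ C * (4 / s) ^ (m+2) := by
    intro m
    obtain ⟨C, hC⟩ := htay (m+1)
    refine ⟨max C 0, le_max_right _ _, fun s hs => ?_⟩
    obtain ⟨h4s, hs0⟩ := hmem4 s hs
    have h := hC (4/s) h4s
    have hsne : s ≠ 0 := hs0.ne'
    have hsplitsum : ∑ k ∈ range (m+1+1), β k * (4/s) ^ k
        = 1 - 3/s + ∑ k ∈ Finset.Icc 2 (m+1), β k * (4/s) ^ k := by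
      have h1 : ∑ k ∈ range (m+2), β k * (4/s) ^ k
          = ∑ k ∈ Finset.Ico 0 2, β k * (4/s) ^ k + ∑ k ∈ Finset.Ico 2 (m+2), β k * (4/s) ^ k := by
        rw [Finset.sum_Ico_consecutive _ (by omega) (by omega), Finset.range_eq_Ico]
      have h2 : ∑ k ∈ Finset.Ico 0 2, β k * (4/s) ^ k = 1 - 3/s := by
        rw [(Finset.range_eq_Ico 2).symm,
          Finset.sum_range_succ, Finset.sum_range_one, hβ0, hβ1]
        field_simp
        ring
      have h3 : Finset.Ico 2 (m+2) = Finset.Icc 2 (m+1) := Finset.Ico_add_one_right_eq_Icc 2 (m+1)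
      rw [show m+1+1 = m+2 from rfl, h1, h2, h3]
    have heq : q s - ∑ k ∈ Finset.Icc 2 (m+1), β k * (4/s) ^ k
        = f (4/s) - ∑ k ∈ range (m+1+1), β k * (4/s) ^ k := by
      rw [hsplitsum, hqdef, hfdef]
      simp only [one_div]
      ring
    rw [heq]
    refine le_trans h ?_
    have : (0:ℝ) ≤ (4/s) ^ (m+2) := by positivity
    exact mul_le_mul_of_nonneg_right (le_max_left _ _) this
  -- continuity of q on [h₀^4, ∞)
  have hqcont : ContinuousOn q (Ici (h₀ ^ 4)) := by
    have hne : ∀ s ∈ Ici (h₀ ^ 4), s ≠ 0 := fun s hs => (lt_of_lt_of_le hA hs).ne'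
    have h4 : ContinuousOn (fun s : ℝ => 4 / s) (Ici (h₀ ^ 4)) :=
      continuousOn_const.div continuousOn_id hne
    have hmap : MapsTo (fun s : ℝ => 4 / s) (Ici (h₀ ^ 4)) (Icc 0 Z) :=
      fun s hs => (hmem4 s hs).1
    have hg4 : ContinuousOn (fun s : ℝ => g (4 / s)) (Ici (h₀ ^ 4)) :=
      (hsmooth.continuousOn).comp h4 hmap
    have hgne4 : ∀ s ∈ Ici (h₀ ^ 4), g (4 / s) ≠ 0 :=
      fun s hs => hgne _ ((hmem4 s hs).1)
    rw [hqdef]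
    exact ((continuousOn_const.div hg4 hgne4).sub continuousOn_const).add
      (continuousOn_const.div continuousOn_id hne)
  -- bounds from the expansion
  obtain ⟨C0, hC0n, hC0⟩ := hqbound 0
  obtain ⟨Cq, hCqn, hCq⟩ := hqbound n
  have hqabs : ∀ s, h₀ ^ 4 ≤ s → |q s| ≤ C0 * (4 / s) ^ 2 := by
    intro s hs
    have h := hC0 s hs
    have hempty : Finset.Icc 2 (0+1) = (∅ : Finset ℕ) := by decide
    rw [hempty, Finset.sum_empty, sub_zero] at h
    exact h
  have hqint : ∀ x, h₀ ^ 4 ≤ x → IntegrableOn q (Ioi x) := by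
    intro x hx
    have hx0 : 0 < x := lt_of_lt_of_le hA hx
    have hsub : Ioi x ⊆ Ici (h₀ ^ 4) := fun s hs => le_trans hx (le_of_lt hs)
    have hmeas : AEStronglyMeasurable q (volume.restrict (Ioi x)) :=
      ((hqcont.mono hsub).aestronglyMeasurable measurableSet_Ioi)
    refine Integrable.mono'
      (((integrableOn_Ioi_rpow_of_lt (by norm_num : (-2:ℝ) < -1) hx0).const_mul (C0 * 16))) hmeas ?_
    rw [ae_restrict_iff' measurableSet_Ioi]
    refine Eventually.of_forall fun s hs => ?_
    have hs' : h₀ ^ 4 ≤ s := hsub hs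
    have hs0 : 0 < s := lt_of_lt_of_le hA hs'
    have h2 : (4 / s : ℝ) ^ 2 = 16 * s ^ (-(2:ℝ)) := by
      rw [show (-(2:ℝ)) = -((2:ℕ):ℝ) by norm_num, Real.rpow_neg hs0.le, Real.rpow_natCast]
      field_simp
      norm_num
    rw [Real.norm_eq_abs]
    calc |q s| ≤ C0 * (4 / s) ^ 2 := hqabs s hs'
      _ = C0 * 16 * s ^ (-(2:ℝ)) := by rw [h2]; ring
  have hpow_eqon : ∀ (k : ℕ) (x : ℝ), 0 < x → ∀ s ∈ Ioi x,
      (4 / s : ℝ) ^ k = (4:ℝ) ^ k * s ^ (-(k:ℝ)) := by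
    intro k x hx0 s hs
    have hs0 : 0 < s := lt_trans hx0 hs
    rw [Real.rpow_neg hs0.le, Real.rpow_natCast, div_pow]
    field_simp
  have hpow_int : ∀ (k : ℕ), 2 ≤ k → ∀ (x : ℝ), 0 < x →
      IntegrableOn (fun s : ℝ => (4 / s) ^ k) (Ioi x) := by
    intro k hk x hx0
    have hlt : -(k:ℝ) < -1 := by
      have h1 : (1:ℝ) < (k:ℝ) := by exact_mod_cast (by omega : 1 < k)
      linarith
    exact IntegrableOn.congr_fun ((integrableOn_Ioi_rpow_of_lt hlt hx0).const_mul ((4:ℝ)^k))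
      (fun s hs => (hpow_eqon k x hx0 s hs).symm) measurableSet_Ioi
  have hpow_val : ∀ (k : ℕ), 2 ≤ k → ∀ (x : ℝ), 0 < x →
      ∫ s in Ioi x, (4 / s : ℝ) ^ k = (4:ℝ) ^ k * (x ^ ((1:ℝ) - (k:ℝ)) / ((k:ℝ) - 1)) := by
    intro k hk x hx0
    have hlt : -(k:ℝ) < -1 := by
      have h1 : (1:ℝ) < (k:ℝ) := by exact_mod_cast (by omega : 1 < k)
      linarith
    have hk1 : (k:ℝ) - 1 ≠ 0 := by
      have h1 : (1:ℝ) < (k:ℝ) := by exact_mod_cast (by omega : 1 < k)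
      linarith
    have hk2 : (1:ℝ) - (k:ℝ) ≠ 0 := by
      intro hcon
      apply hk1
      linarith
    rw [setIntegral_congr_fun measurableSet_Ioi (fun s hs => hpow_eqon k x hx0 s hs),
      MeasureTheory.integral_const_mul, integral_Ioi_rpow_of_lt hlt hx0,
      show -(k:ℝ) + 1 = 1 - (k:ℝ) by ring]
    field_simp
    ring
  have hGx : ∀ x, h₀ ^ 4 ≤ x → G x = x - 3 * Real.log x + c - ∫ s in Ioi x, q s := by
    intro x hx
    have hx0 : 0 < x := lt_of_lt_of_le hA hx
    have huIcc : uIcc (h₀ ^ 4) x = Icc (h₀ ^ 4) x := uIcc_of_le hx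
    have hnz : ∀ s ∈ uIcc (h₀ ^ 4) x, s ≠ 0 := by
      intro s hs
      rw [huIcc] at hs
      exact (lt_of_lt_of_le hA hs.1).ne'
    have hint3 : IntervalIntegrable (fun s : ℝ => 3 / s) volume (h₀ ^ 4) x :=
      (continuousOn_const.div continuousOn_id hnz).intervalIntegrable
    have hint1 : IntervalIntegrable (fun s : ℝ => 1 - 3 / s) volume (h₀ ^ 4) x :=
      (continuousOn_const.sub (continuousOn_const.div continuousOn_id hnz)).intervalIntegrable
    have hintq : IntervalIntegrable q volume (h₀ ^ 4) x :=
      (hqcont.mono (by rw [huIcc]; exact fun s hs => hs.1)).intervalIntegrable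
    have hcongr : ∀ s ∈ uIcc (h₀ ^ 4) x, (g (4 / s))⁻¹ = (fun s : ℝ => (1 - 3 / s) + q s) s := by
      intro s _
      have hq' : q s = 1 / g (4 / s) - 1 + 3 / s := rfl
      simp only [hq', one_div]
      ring
    rw [hG x hx, intervalIntegral.integral_congr hcongr,
      intervalIntegral.integral_add hint1 hintq,
      intervalIntegral.integral_sub intervalIntegrable_const hint3]
    have hi1 : ∫ _ in (h₀ ^ 4)..x, (1:ℝ) = x - h₀ ^ 4 := integral_one
    have hi3 : ∫ s in (h₀ ^ 4)..x, 3 / s = 3 * (Real.log x - Real.log (h₀ ^ 4)) := by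
      have h35 : ∀ s ∈ uIcc (h₀ ^ 4) x, 3 / s = (fun s : ℝ => 3 * s⁻¹) s := fun s _ => by
        simp only
        ring
      rw [intervalIntegral.integral_congr h35, intervalIntegral.integral_const_mul,
        integral_inv_of_pos hA hx0, Real.log_div hx0.ne' hA.ne']
    have hiq : ∫ s in (h₀ ^ 4)..x, q s
        = (∫ s in Ioi (h₀ ^ 4), q s) - ∫ s in Ioi x, q s := by
      have hu : Ioc (h₀ ^ 4) x ∪ Ioi x = Ioi (h₀ ^ 4) := Ioc_union_Ioi_eq_Ioi hx
      have hdisj : Disjoint (Ioc (h₀ ^ 4) x) (Ioi x) := Ioc_disjoint_Ioi le_rfl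
      have hsplit := setIntegral_union hdisj measurableSet_Ioi hintq.1 (hqint x hx)
      rw [hu] at hsplit
      rw [intervalIntegral.integral_of_le hx]
      rw [hsplit]
      ring
    rw [hi1, hi3, hiq, hc]
    ring
  -- final estimate
  rw [Asymptotics.isBigO_iff]
  refine ⟨Cq * 4 ^ (n+2) / (n+1), ?_⟩
  filter_upwards [eventually_ge_atTop (max (h₀ ^ 4) 1)] with x hx
  have hxA : h₀ ^ 4 ≤ x := le_trans (le_max_left _ _) hx
  have hx1 : (1:ℝ) ≤ x := le_trans (le_max_right _ _) hx
  have hx0 : 0 < x := lt_of_lt_of_le hA hxA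
  set r : ℝ → ℝ := fun s => q s - ∑ k ∈ Finset.Icc 2 (n+1), β k * (4 / s) ^ k with hrdef
  have hsumint : IntegrableOn
      (fun s : ℝ => ∑ k ∈ Finset.Icc 2 (n+1), β k * (4 / s) ^ k) (Ioi x) := by
    apply MeasureTheory.integrable_finset_sum
    intro k hk
    exact (hpow_int k (Finset.mem_Icc.1 hk).1 x hx0).const_mul (β k)
  have hrint : IntegrableOn r (Ioi x) := (hqint x hxA).sub hsumint
  have hqsplit : ∫ s in Ioi x, q s
      = (∑ k ∈ Finset.Icc 2 (n+1), β k * ((4:ℝ) ^ k * (x ^ ((1:ℝ) - (k:ℝ)) / ((k:ℝ) - 1))))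
        + ∫ s in Ioi x, r s := by
    have h1 : ∀ s : ℝ, q s = (∑ k ∈ Finset.Icc 2 (n+1), β k * (4 / s) ^ k) + r s := by
      intro s
      rw [hrdef]
      ring
    rw [integral_congr_ae (ae_of_all _ h1), integral_add hsumint hrint,
      integral_finset_sum _ (fun k hk => (hpow_int k (Finset.mem_Icc.1 hk).1 x hx0).const_mul (β k))]
    congr 1
    refine Finset.sum_congr rfl fun k hk => ?_
    rw [MeasureTheory.integral_const_mul, hpow_val k (Finset.mem_Icc.1 hk).1 x hx0]
  have hclosed : 4 * ∑ k ∈ Finset.Icc 1 n, β (k+1) / k * (4 / x) ^ k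
      = ∑ k ∈ Finset.Icc 2 (n+1), β k * ((4:ℝ) ^ k * (x ^ ((1:ℝ) - (k:ℝ)) / ((k:ℝ) - 1))) := by
    have hmap : Finset.Icc 2 (n+1) = (Finset.Icc 1 n).map (addRightEmbedding 1) := by
      rw [Finset.map_add_right_Icc]
    rw [hmap, Finset.sum_map, Finset.mul_sum]
    refine Finset.sum_congr rfl fun j hj => ?_
    have hj1 : 1 ≤ j := (Finset.mem_Icc.1 hj).1
    have hjr : (1:ℝ) ≤ (j:ℝ) := by exact_mod_cast hj1
    simp only [addRightEmbedding_apply]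
    have hxr : x ^ ((1:ℝ) - ((j+1 : ℕ):ℝ)) = (x ^ j)⁻¹ := by
      push_cast
      rw [show (1:ℝ) - ((j:ℝ) + 1) = -(j:ℝ) by ring, Real.rpow_neg hx0.le, Real.rpow_natCast]
    rw [hxr]
    push_cast
    have hjne : (j:ℝ) ≠ 0 := by linarith
    have hxne : x ≠ 0 := hx0.ne'
    rw [show (j:ℝ) + 1 - 1 = j by ring]
    ring
  have hrbound : |∫ s in Ioi x, r s| ≤ Cq * 4 ^ (n+2) / (n+1) * x ^ (-(n:ℝ) - 1) := by
    have hbnd : ∀ s ∈ Ioi x, |r s| ≤ Cq * 4 ^ (n+2) * s ^ (-((n:ℝ)+2)) := by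
      intro s hs
      have hs' : h₀ ^ 4 ≤ s := le_trans hxA (le_of_lt hs)
      have hs0 : 0 < s := lt_of_lt_of_le hA hs'
      have h := hCq s hs'
      have h2 : (4 / s : ℝ) ^ (n+2) = 4 ^ (n+2) * s ^ (-((n:ℝ)+2)) := by
        rw [show -((n:ℝ)+2) = -(((n+2:ℕ)):ℝ) by push_cast; ring, Real.rpow_neg hs0.le,
          Real.rpow_natCast, div_pow]
        field_simp
      calc |r s| ≤ Cq * (4 / s) ^ (n+2) := h
        _ = Cq * 4 ^ (n+2) * s ^ (-((n:ℝ)+2)) := by rw [h2]; ring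
    have hlt : -((n:ℝ)+2) < -1 := by
      have h1 : (0:ℝ) ≤ (n:ℝ) := Nat.cast_nonneg n
      linarith
    have hbint : IntegrableOn (fun s : ℝ => Cq * 4 ^ (n+2) * s ^ (-((n:ℝ)+2))) (Ioi x) :=
      (integrableOn_Ioi_rpow_of_lt hlt hx0).const_mul _
    have hn1 : ((n:ℝ) + 1) ≠ 0 := by positivity
    calc |∫ s in Ioi x, r s| = ‖∫ s in Ioi x, r s‖ := (Real.norm_eq_abs _).symm
      _ ≤ ∫ s in Ioi x, ‖r s‖ := norm_integral_le_integral_norm _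
      _ = ∫ s in Ioi x, |r s| := by simp only [Real.norm_eq_abs]
      _ ≤ ∫ s in Ioi x, Cq * 4 ^ (n+2) * s ^ (-((n:ℝ)+2)) :=
          setIntegral_mono_on hrint.abs hbint measurableSet_Ioi hbnd
      _ = Cq * 4 ^ (n+2) * ∫ s in Ioi x, s ^ (-((n:ℝ)+2)) := MeasureTheory.integral_const_mul _ _
      _ = Cq * 4 ^ (n+2) / (n+1) * x ^ (-(n:ℝ) - 1) := by
          rw [integral_Ioi_rpow_of_lt hlt hx0,
            show -((n:ℝ)+2) + 1 = -(n:ℝ) - 1 by ring]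
          have hne : (-(n:ℝ) - 1) ≠ 0 := by
            intro hcon
            apply hn1
            linarith
          field_simp
          ring
  rw [hGx x hxA, hqsplit, ← hclosed, Real.norm_eq_abs, Real.norm_eq_abs]
  have hX : x - 3 * Real.log x + c
        - ((4 * ∑ k ∈ Finset.Icc 1 n, β (k+1) / k * (4 / x) ^ k) + ∫ s in Ioi x, r s)
        - (x - 3 * Real.log x + c - 4 * ∑ k ∈ Finset.Icc 1 n, β (k+1) / (k:ℝ) * (4 / x) ^ k)
      = -(∫ s in Ioi x, r s) := by ring
  rw [hX, abs_neg, abs_of_pos (Real.rpow_pos_of_pos hx0 _)]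
  exact hrbound
end

section
/- Let G : [h₀⁴, ∞) → [0,∞) be strictly increasing with G(x) = x − 3 ln x + O(1) as x → ∞ and G'(y) = 1/g(4/y) where 0 ≤ 1 − 1/g(4/y) ≤ 4/y for y large. Then there exists x⋆ such that for all x > x⋆: 0 ≤ G⁻¹(x) − x ≤ (x/(x−4)) (x − G(x)). -/
open Set Filter

/-- Let `G : [h₀⁴, ∞) → [0,∞)` be strictly increasing with
`G(x) = x − 3 ln x + O(1)`, `G'(y) = 1/g(4/y)`, and `0 ≤ 1 − 1/g(4/y) ≤ 4/y`
for `y` large. Then there exists `x⋆` such that for all `x > x⋆`,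
`0 ≤ G⁻¹(x) − x ≤ (x/(x−4))(x − G(x))`. -/
theorem stmt_16 (h₀ : ℝ) (hh₀ : 0 < h₀) (g G Ginv : ℝ → ℝ)
    (hmono : StrictMonoOn G (Ici (h₀ ^ 4)))
    (hG0 : G (h₀ ^ 4) = 0)
    (hGasymp : (fun x : ℝ => G x - (x - 3 * Real.log x)) =O[atTop]
      (fun _ : ℝ => (1 : ℝ)))
    (hG' : ∀ y : ℝ, h₀ ^ 4 ≤ y → HasDerivAt G (1 / g (4 / y)) y)
    (hg : ∃ y₀ : ℝ, ∀ y : ℝ, y₀ ≤ y →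
      0 ≤ 1 - 1 / g (4 / y) ∧ 1 - 1 / g (4 / y) ≤ 4 / y)
    (hGinv_left : ∀ y : ℝ, h₀ ^ 4 ≤ y → Ginv (G y) = y)
    (hGinv_right : ∀ x : ℝ, 0 ≤ x → h₀ ^ 4 ≤ Ginv x ∧ G (Ginv x) = x) :
    ∃ xs : ℝ, ∀ x : ℝ, xs < x →
      0 ≤ Ginv x - x ∧ Ginv x - x ≤ x / (x - 4) * (x - G x) := by
  obtain ⟨y₀, hy₀⟩ := hg
  obtain ⟨C, hC⟩ := hGasymp.bound
  have hlog : ∀ᶠ x : ℝ in atTop, C ≤ 3 * Real.log x := by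
    filter_upwards [Real.tendsto_log_atTop.eventually_ge_atTop (C / 3)] with x hx
    linarith
  have hGle : ∀ᶠ x : ℝ in atTop, G x ≤ x := by
    filter_upwards [hC, hlog] with x h1 h2
    have h1' : |G x - (x - 3 * Real.log x)| ≤ C := by simpa using h1
    linarith [(abs_le.mp h1').2]
  have key : ∀ᶠ x : ℝ in atTop,
      0 ≤ Ginv x - x ∧ Ginv x - x ≤ x / (x - 4) * (x - G x) := by
    filter_upwards [hGle, eventually_gt_atTop 4, eventually_ge_atTop (h₀ ^ 4),
      eventually_ge_atTop y₀] with x hGx hx4 hxh hxy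
    have hx0 : (0:ℝ) ≤ x := by linarith
    obtain ⟨hu1, hu2⟩ := hGinv_right x hx0
    set u := Ginv x with hu
    have hxu : x ≤ u :=
      (hmono.le_iff_le (mem_Ici.mpr hxh) (mem_Ici.mpr hu1)).mp (by rw [hu2]; exact hGx)
    have hx4' : (0:ℝ) < x - 4 := by linarith
    have hxpos : (0:ℝ) < x := by linarith
    have hRHSfac : 0 ≤ x - G x := by linarith
    refine ⟨by linarith, ?_⟩
    rcases eq_or_lt_of_le hxu with heq | hlt
    · rw [← heq]
      simp only [sub_self]
      positivity
    · obtain ⟨c, hc, hc'⟩ := exists_hasDerivAt_eq_slope G (fun y => 1 / g (4 / y)) hlt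
        (fun y hy => ((hG' y (le_trans hxh hy.1)).continuousAt).continuousWithinAt)
        (fun y hy => hG' y (by linarith [hy.1]))
      have hcge : x ≤ c := le_of_lt hc.1
      have hcpos : (0:ℝ) < c := lt_of_lt_of_le hxpos hcge
      have hgc := hy₀ c (le_trans hxy hcge)
      have h4 : 4 / c ≤ 4 / x :=
        div_le_div_of_nonneg_left (by norm_num) hxpos hcge
      have h1 : 1 - 4 / x ≤ 1 / g (4 / c) := by linarith [hgc.2]
      have hpos : (0:ℝ) < u - x := by linarith
      have hslope : (x - G x) / (u - x) = 1 / g (4 / c) := by rw [hc', hu2]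
      have h2 : 1 - 4 / x ≤ (x - G x) / (u - x) := by rw [hslope]; exact h1
      have h3 : (1 - 4 / x) * (u - x) ≤ x - G x := by
        have := mul_le_mul_of_nonneg_right h2 (le_of_lt hpos)
        rwa [div_mul_cancel₀ _ (ne_of_gt hpos)] at this
      rw [div_mul_eq_mul_div, le_div_iff₀ hx4']
      have hxinv : (1 - 4 / x) * x = x - 4 := by field_simp
      nlinarith [mul_le_mul_of_nonneg_right h3 hx0]
  obtain ⟨a, ha⟩ := eventually_atTop.mp key
  exact ⟨a, fun x hx => ⟨(ha x hx.le).1, (ha x hx.le).2⟩⟩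
end

section
/- With G as in the reduction of h³(h''+h') = 1 (G(x) = ∫_{h₀⁴}^x ds/g(4/s)), the inverse function satisfies G⁻¹(x) = x + O(ln x) as x → +∞. -/
open Set Filter

/-- With `G(x) = ∫_{h₀⁴}^x ds/g(4/s)` (from the reduction of `h³(h''+h') = 1`),
the inverse function satisfies `G⁻¹(x) = x + O(ln x)` as `x → +∞`. -/
theorem stmt_17 (h₀ : ℝ) (hh₀ : 0 < h₀)
    (g : ℝ → ℝ) (hsmooth : ContDiffOn ℝ (⊤ : ℕ∞) g (Icc 0 (4 / h₀ ^ 4)))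
    (h0 : g 0 = 1)
    (hpos : ∀ z ∈ Icc (0 : ℝ) (4 / h₀ ^ 4), 0 < g z)
    (hsol : ∀ z ∈ Ioc (0 : ℝ) (4 / h₀ ^ 4),
      (1 - 3 / 4 * z * g z - z ^ 2 * deriv g z) * g z = 1)
    (G Ginv : ℝ → ℝ)
    (hG : ∀ x : ℝ, h₀ ^ 4 ≤ x → G x = ∫ s in (h₀ ^ 4)..x, (g (4 / s))⁻¹)
    (hGinv_left : ∀ y : ℝ, h₀ ^ 4 ≤ y → Ginv (G y) = y)
    (hGinv_right : ∀ x : ℝ, 0 ≤ x → h₀ ^ 4 ≤ Ginv x ∧ G (Ginv x) = x) :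
    (fun x : ℝ => Ginv x - x) =O[atTop] Real.log := by
  have h4 : (0:ℝ) < h₀ ^ 4 := by positivity
  have hK4 : (0:ℝ) < 4 / h₀ ^ 4 := by positivity
  set K := Icc (0:ℝ) (4 / h₀ ^ 4) with hKdef
  have h0K : (0:ℝ) ∈ K := ⟨le_rfl, hK4.le⟩
  have hgc : ContinuousOn g K := hsmooth.continuousOn
  obtain ⟨zM, hzM, hmax⟩ := isCompact_Icc.exists_isMaxOn ⟨0, h0K⟩ hgc
  set M := g zM with hMdef
  have hMpos : 0 < M := hpos zM hzM
  have hub : ∀ z ∈ K, g z ≤ M := fun z hz => hmax hz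
  obtain ⟨zm, hzm, hmin⟩ := isCompact_Icc.exists_isMinOn ⟨0, h0K⟩ hgc
  set m := g zm with hmdef
  have hmpos : 0 < m := hpos zm hzm
  have hlb : ∀ z ∈ K, m ≤ g z := fun z hz => hmin hz
  -- g z - 1 = O(z) near 0
  have hdiff : DifferentiableWithinAt ℝ g K 0 :=
    (hsmooth.differentiableOn (by norm_num)) 0 h0K
  have hbigO : (fun z => g z - g 0) =O[nhdsWithin 0 K] fun z => z - 0 := hdiff.isBigO_sub
  obtain ⟨C, hC⟩ := Asymptotics.isBigO_iff.mp hbigO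
  rw [eventually_nhdsWithin_iff, Metric.eventually_nhds_iff] at hC
  obtain ⟨ε, hε, hCε⟩ := hC
  set C₁ : ℝ := max C ((M + 1) / ε) with hC₁def
  have hC₁pos : 0 < C₁ := lt_max_of_lt_right (by positivity)
  have hkey : ∀ z ∈ K, |g z - 1| ≤ C₁ * z := by
    intro z hz
    have hz0 : 0 ≤ z := hz.1
    rcases lt_or_ge z ε with h | h
    · have := hCε (by rw [Real.dist_eq, sub_zero, abs_of_nonneg hz0]; exact h) hz
      rw [h0, Real.norm_eq_abs, Real.norm_eq_abs, sub_zero, abs_of_nonneg hz0] at this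
      exact this.trans (mul_le_mul_of_nonneg_right (le_max_left _ _) hz0)
    · have h1 : |g z - 1| ≤ M + 1 := by
        have h2 := hpos z hz
        have h3 := hub z hz
        rw [abs_le]; constructor <;> linarith
      have h4' : M + 1 ≤ (M + 1) / ε * z := by
        rw [div_mul_eq_mul_div, le_div_iff₀ hε]
        have : 0 ≤ M + 1 := by linarith
        nlinarith
      calc |g z - 1| ≤ M + 1 := h1
        _ ≤ (M + 1) / ε * z := h4'
        _ ≤ C₁ * z := mul_le_mul_of_nonneg_right (le_max_right _ _) hz0
  -- inverse bound
  set c : ℝ := C₁ / m with hcdef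
  have hcpos : 0 < c := by positivity
  have hinv : ∀ z ∈ K, |(g z)⁻¹ - 1| ≤ c * z := by
    intro z hz
    have hgz := hpos z hz
    have : (g z)⁻¹ - 1 = (1 - g z) * (g z)⁻¹ := by field_simp
    rw [this, abs_mul, abs_of_nonneg (inv_nonneg.mpr hgz.le), abs_sub_comm]
    calc |g z - 1| * (g z)⁻¹ ≤ (C₁ * z) * m⁻¹ := by
          apply mul_le_mul (hkey z hz) _ (inv_nonneg.mpr hgz.le) (mul_nonneg hC₁pos.le hz.1)
          exact inv_anti₀ hmpos (hlb z hz)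
      _ = c * z := by rw [hcdef]; ring
  have hmem : ∀ s : ℝ, h₀ ^ 4 ≤ s → 4 / s ∈ K := by
    intro s hs
    have hs0 : 0 < s := lt_of_lt_of_le h4 hs
    exact ⟨by positivity, by gcongr⟩
  -- continuity & integrability
  have hcont : ∀ y : ℝ, ContinuousOn (fun s => (g (4 / s))⁻¹) (Icc (h₀ ^ 4) y) := by
    intro y
    apply ContinuousOn.inv₀
    · exact hgc.comp (continuousOn_const.div continuousOn_id
        (fun s hs => (lt_of_lt_of_le h4 hs.1).ne')) (fun s hs => hmem s hs.1)
    · exact fun s hs => (hpos _ (hmem s hs.1)).ne'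
  have hint : ∀ y : ℝ, h₀ ^ 4 ≤ y →
      IntervalIntegrable (fun s => (g (4 / s))⁻¹) MeasureTheory.volume (h₀ ^ 4) y := by
    intro y hy
    apply ContinuousOn.intervalIntegrable
    rw [uIcc_of_le hy]; exact hcont y
  have hint1 : ∀ y : ℝ, h₀ ^ 4 ≤ y →
      IntervalIntegrable (fun s : ℝ => (g (4 / s))⁻¹ - 1) MeasureTheory.volume (h₀ ^ 4) y :=
    fun y hy => (hint y hy).sub intervalIntegrable_const
  have hints : ∀ y : ℝ, h₀ ^ 4 ≤ y →
      IntervalIntegrable (fun s : ℝ => 4 * c * s⁻¹) MeasureTheory.volume (h₀ ^ 4) y := by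
    intro y hy
    apply ContinuousOn.intervalIntegrable
    apply ContinuousOn.mul continuousOn_const
    apply ContinuousOn.inv₀ continuousOn_id
    intro s hs
    rw [uIcc_of_le hy] at hs
    exact (lt_of_lt_of_le h4 hs.1).ne'
  -- main estimate on G
  have hGbound : ∀ y : ℝ, h₀ ^ 4 ≤ y →
      |G y - (y - h₀ ^ 4)| ≤ 4 * c * (Real.log y - Real.log (h₀ ^ 4)) := by
    intro y hy
    have hsplit : G y - (y - h₀ ^ 4) = ∫ s in (h₀ ^ 4)..y, ((g (4 / s))⁻¹ - 1) := by
      rw [intervalIntegral.integral_sub (hint y hy) intervalIntegrable_const,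
        intervalIntegral.integral_const, hG y hy]
      simp
    rw [hsplit]
    have hbd : ‖∫ s in (h₀ ^ 4)..y, ((g (4 / s))⁻¹ - 1)‖ ≤
        |∫ s in (h₀ ^ 4)..y, 4 * c * s⁻¹| := by
      apply intervalIntegral.norm_integral_le_abs_of_norm_le _ (hints y hy)
      rw [uIoc_of_le hy]
      refine (MeasureTheory.ae_restrict_iff' measurableSet_Ioc).mpr (.of_forall fun t ht => ?_)
      have ht0 : 0 < t := lt_trans h4 ht.1
      have := hinv _ (hmem t ht.1.le)
      rw [Real.norm_eq_abs]
      calc |(g (4 / t))⁻¹ - 1| ≤ c * (4 / t) := this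
        _ = 4 * c * t⁻¹ := by field_simp
    have hval : ∫ s in (h₀ ^ 4)..y, 4 * c * s⁻¹ = 4 * c * (Real.log y - Real.log (h₀ ^ 4)) := by
      rw [intervalIntegral.integral_const_mul, integral_inv, Real.log_div
        (lt_of_lt_of_le h4 hy).ne' h4.ne']
      rw [uIcc_of_le hy]
      exact fun h => absurd h4 (by simp at h; linarith [h.1])
    rw [Real.norm_eq_abs] at hbd
    refine hbd.trans ?_
    rw [hval, abs_of_nonneg]
    have hd : Real.log (h₀ ^ 4) ≤ Real.log y := Real.log_le_log h4 hy
    exact mul_nonneg (by linarith) (by linarith)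
  -- lower linear bound on G
  have hGlow : ∀ y : ℝ, h₀ ^ 4 ≤ y → (y - h₀ ^ 4) * M⁻¹ ≤ G y := by
    intro y hy
    rw [hG y hy]
    have hmono := intervalIntegral.integral_mono_on hy intervalIntegrable_const (hint y hy)
      (fun s hs => inv_anti₀ (hpos _ (hmem s hs.1)) (hub _ (hmem s hs.1)))
    rwa [intervalIntegral.integral_const, smul_eq_mul] at hmono
  -- conclusion
  rw [Asymptotics.isBigO_iff]
  set A : ℝ := 4 * c * |Real.log (M + h₀ ^ 4)| + 4 * c * |Real.log (h₀ ^ 4)| + h₀ ^ 4 with hAdef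
  have hA : 0 ≤ A := by
    have h1 : 0 ≤ 4 * c * |Real.log (M + h₀ ^ 4)| := mul_nonneg (by linarith) (abs_nonneg _)
    have h2 : 0 ≤ 4 * c * |Real.log (h₀ ^ 4)| := mul_nonneg (by linarith) (abs_nonneg _)
    rw [hAdef]; linarith
  refine ⟨4 * c + A, ?_⟩
  filter_upwards [eventually_ge_atTop (max (Real.exp 1) 1)] with x hx
  have hx1 : (1:ℝ) ≤ x := le_trans (le_max_right _ _) hx
  have hxpos : 0 < x := lt_of_lt_of_le one_pos hx1
  have hlog1 : 1 ≤ Real.log x := by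
    rw [Real.le_log_iff_exp_le hxpos]
    exact le_trans (le_max_left _ _) hx
  obtain ⟨hy0, hGy⟩ := hGinv_right x (by linarith)
  set y := Ginv x with hydef
  have hypos : 0 < y := lt_of_lt_of_le h4 hy0
  have hyle : y ≤ (M + h₀ ^ 4) * x := by
    have h1 := hGlow y hy0
    rw [hGy] at h1
    have h2 : y - h₀ ^ 4 ≤ x * M := by
      have h3 := mul_le_mul_of_nonneg_right h1 hMpos.le
      rwa [mul_assoc, inv_mul_cancel₀ hMpos.ne', mul_one] at h3
    have h3 : h₀ ^ 4 ≤ h₀ ^ 4 * x := le_mul_of_one_le_right h4.le hx1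
    nlinarith
  have hlogy : Real.log y ≤ Real.log (M + h₀ ^ 4) + Real.log x := by
    calc Real.log y ≤ Real.log ((M + h₀ ^ 4) * x) := Real.log_le_log hypos hyle
      _ = Real.log (M + h₀ ^ 4) + Real.log x :=
          Real.log_mul (by positivity) hxpos.ne'
  have hb := hGbound y hy0
  rw [hGy] at hb
  have hb' := abs_le.mp hb
  have hmul : 4 * c * Real.log y ≤ 4 * c * (Real.log (M + h₀ ^ 4) + Real.log x) :=
    mul_le_mul_of_nonneg_left hlogy (by positivity)
  have habs1 : Real.log (M + h₀ ^ 4) ≤ |Real.log (M + h₀ ^ 4)| := le_abs_self _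
  have habs2 : -|Real.log (h₀ ^ 4)| ≤ Real.log (h₀ ^ 4) := neg_abs_le _
  have hAx : A ≤ A * Real.log x := le_mul_of_one_le_right hA hlog1
  rw [Real.norm_eq_abs, Real.norm_eq_abs, abs_of_nonneg (by linarith : (0:ℝ) ≤ Real.log x)]
  rw [abs_le]
  constructor <;> nlinarith [hb'.1, hb'.2]
end

section
/- Let g be the smooth positive left maximal solution on [0, 4/h₀⁴] of (1 − (3/4)z g − z² g') g = 1 with initial data g(4/h₀⁴) = h₀³h₁ > 0, and define G(x) = ∫_{h₀⁴}^x ds/g(4/s) and h(t) = (G⁻¹(4t))^{1/4}. Then h solves h³(h'' + h') = 1 on [0,∞) with h(0) = h₀ and h'(0) = h₁. -/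
open Set Filter Topology

/-- If `g` is the smooth positive solution on `[0, 4/h₀⁴]` of
`(1 − (3/4) z g − z² g') g = 1` with `g(4/h₀⁴) = h₀³ h₁ > 0` and `g 0 = 1`,
`G(x) = ∫_{h₀⁴}^x ds/g(4/s)`, and `h(t) = (G⁻¹(4t))^{1/4}`, then `h` solves
`h³(h'' + h') = 1` on `[0,∞)` with `h 0 = h₀` and `h' 0 = h₁`. -/
theorem stmt_18 (h₀ h₁ : ℝ) (hh₀ : 0 < h₀) (hh₁ : 0 < h₁)
    (g : ℝ → ℝ) (hsmooth : ContDiffOn ℝ (⊤ : ℕ∞) g (Icc 0 (4 / h₀ ^ 4)))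
    (h0 : g 0 = 1) (hinit : g (4 / h₀ ^ 4) = h₀ ^ 3 * h₁)
    (hpos : ∀ z ∈ Icc (0 : ℝ) (4 / h₀ ^ 4), 0 < g z)
    (hsol : ∀ z ∈ Ioc (0 : ℝ) (4 / h₀ ^ 4),
      (1 - 3 / 4 * z * g z - z ^ 2 * deriv g z) * g z = 1)
    (G Ginv : ℝ → ℝ)
    (hG : ∀ x : ℝ, h₀ ^ 4 ≤ x → G x = ∫ s in (h₀ ^ 4)..x, (g (4 / s))⁻¹)
    (hGinv_left : ∀ y : ℝ, h₀ ^ 4 ≤ y → Ginv (G y) = y)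
    (hGinv_right : ∀ x : ℝ, 0 ≤ x → h₀ ^ 4 ≤ Ginv x ∧ G (Ginv x) = x)
    (h : ℝ → ℝ) (hdef : ∀ t : ℝ, 0 ≤ t → h t = Ginv (4 * t) ^ ((1 : ℝ) / 4)) :
    (∀ t ∈ Ici (0 : ℝ),
        h t ^ 3 * (derivWithin (derivWithin h (Ici 0)) (Ici 0) t
          + derivWithin h (Ici 0) t) = 1) ∧
      h 0 = h₀ ∧ derivWithin h (Ici 0) 0 = h₁ := by
  have hb : (0:ℝ) < h₀ ^ 4 := by positivity
  have hz₀ : (0:ℝ) < 4 / h₀ ^ 4 := by positivity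
  set b : ℝ := h₀ ^ 4 with hbdef
  set z₀ : ℝ := 4 / h₀ ^ 4 with hz₀def
  set f : ℝ → ℝ := fun s => (g (4 / s))⁻¹ with hfdef
  -- basic facts
  have hmem : ∀ x : ℝ, b ≤ x → 4 / x ∈ Ioc 0 z₀ := by
    intro x hx
    have hx0 : 0 < x := lt_of_lt_of_le hb hx
    exact ⟨by positivity, div_le_div_of_nonneg_left (by norm_num) hb hx⟩
  have hmemIcc : ∀ x : ℝ, b ≤ x → 4 / x ∈ Icc 0 z₀ := fun x hx =>
    Ioc_subset_Icc_self (hmem x hx)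
  have hgpos : ∀ x : ℝ, b ≤ x → 0 < g (4 / x) := fun x hx => hpos _ (hmemIcc x hx)
  have hfpos : ∀ x : ℝ, b ≤ x → 0 < f x := fun x hx => by
    exact inv_pos.2 (hgpos x hx)
  have hGb : G b = 0 := by
    rw [hG b le_rfl, intervalIntegral.integral_same]
  have hginv0 : Ginv 0 = b := by
    have := hGinv_left b le_rfl
    rwa [hGb] at this
  -- continuity of f
  have hfc : ContinuousOn f (Ici b) := by
    have h4 : ContinuousOn (fun s : ℝ => 4 / s) (Ici b) := by
      apply ContinuousOn.div continuousOn_const continuousOn_id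
      intro x hx; exact ne_of_gt (lt_of_lt_of_le hb hx)
    have hcomp : ContinuousOn (fun s : ℝ => g (4 / s)) (Ici b) :=
      hsmooth.continuousOn.comp h4 (fun x hx => hmemIcc x hx)
    exact hcomp.inv₀ (fun x hx => ne_of_gt (hgpos x hx))
  have hfca : ∀ x : ℝ, b < x → ContinuousAt f x := by
    intro x hx
    have hx0 : (0:ℝ) < x := lt_trans hb hx
    have h4 : ContinuousAt (fun s : ℝ => 4 / s) x :=
      ContinuousAt.div continuousAt_const continuousAt_id (ne_of_gt hx0)
    have hmemI : 4 / x ∈ Ioo 0 z₀ :=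
      ⟨(hmem x hx.le).1, div_lt_div_of_pos_left (by norm_num) hb hx⟩
    have hgc : ContinuousAt g (4 / x) :=
      hsmooth.continuousOn.continuousAt (Icc_mem_nhds hmemI.1 hmemI.2)
    exact (hgc.comp h4).inv₀ (ne_of_gt (hgpos x hx.le))
  -- derivative of G
  have hGda : ∀ x : ℝ, b < x → HasDerivAt G (f x) x := by
    intro x hx
    have hint : IntervalIntegrable f MeasureTheory.volume b x :=
      (hfc.mono (by rw [uIcc_of_le hx.le]; exact Icc_subset_Ici_self)).intervalIntegrable
    have hmeas : StronglyMeasurableAtFilter f (𝓝 x) :=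
      (hfc.mono (Ioi_subset_Ici_self)).stronglyMeasurableAtFilter isOpen_Ioi x hx
    have hFG : HasDerivAt (fun u => ∫ s in b..u, f s) (f x) x :=
      intervalIntegral.integral_hasDerivAt_right hint hmeas (hfca x hx)
    apply hFG.congr_of_eventuallyEq
    filter_upwards [Ici_mem_nhds hx] with y hy using hG y hy
  have hGd : ∀ x : ℝ, b ≤ x → HasDerivWithinAt G (f x) (Ici b) x := by
    intro x hx
    rcases eq_or_lt_of_le hx with rfl | hx'
    · have hint : IntervalIntegrable f MeasureTheory.volume b b :=
        (hfc.mono (by simp [uIcc_self])).intervalIntegrable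
      have hmeas : StronglyMeasurableAtFilter f (𝓝[>] b) := by
        have : StronglyMeasurableAtFilter f (𝓝[Ici b] b) MeasureTheory.volume :=
          hfc.stronglyMeasurableAtFilter_nhdsWithin measurableSet_Ici b
        exact ⟨_, nhdsWithin_mono b Ioi_subset_Ici_self this.choose_spec.1,
          this.choose_spec.2⟩
      have hFG : HasDerivWithinAt (fun u => ∫ s in b..u, f s) (f b) (Ici b) b :=
        intervalIntegral.integral_hasDerivWithinAt_right hint hmeas
          ((hfc b self_mem_Ici).mono Ioi_subset_Ici_self)
      exact hFG.congr (fun y hy => hG y hy) (hG b le_rfl)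
    · exact (hGda x hx').hasDerivWithinAt
  have hGc : ContinuousOn G (Ici b) := fun x hx =>
    (hGd x hx).continuousWithinAt
  have hGmono : StrictMonoOn G (Ici b) := by
    apply strictMonoOn_of_deriv_pos (convex_Ici b) hGc
    intro x hx
    rw [interior_Ici] at hx
    rw [(hGda x hx).deriv]
    exact hfpos x hx.le
  have hGnonneg : ∀ y : ℝ, b ≤ y → 0 ≤ G y := by
    intro y hy
    rcases eq_or_lt_of_le hy with rfl | hy'
    · exact le_of_eq hGb.symm
    · rw [← hGb]; exact (hGmono self_mem_Ici (le_of_lt hy') hy').le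
  have hImono : StrictMonoOn Ginv (Ici 0) := by
    intro y₁ hy₁ y₂ hy₂ hlt
    by_contra hc
    push_neg at hc
    have := hGmono.monotoneOn (hGinv_right y₂ hy₂).1 (hGinv_right y₁ hy₁).1 hc
    rw [(hGinv_right y₁ hy₁).2, (hGinv_right y₂ hy₂).2] at this
    exact absurd this (not_le.2 hlt)
  have hIsurj : ∀ a : ℝ, 0 ≤ a → SurjOn Ginv (Ici 0) (Ioi (Ginv a)) := by
    intro a ha v hv
    have hbv : b ≤ v := le_trans (hGinv_right a ha).1 (le_of_lt hv)
    exact ⟨G v, hGnonneg v hbv, hGinv_left v hbv⟩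
  have hIcont : ∀ a : ℝ, 0 ≤ a → ContinuousWithinAt Ginv (Ici 0) a := by
    intro a ha
    rcases eq_or_lt_of_le ha with rfl | ha'
    · exact hImono.continuousWithinAt_right_of_surjOn self_mem_nhdsWithin
        (hIsurj 0 le_rfl)
    · have hr : ContinuousWithinAt Ginv (Ici a) a :=
        hImono.continuousWithinAt_right_of_surjOn
          (mem_of_superset self_mem_nhdsWithin (Ici_subset_Ici.2 ha'.le)) (hIsurj a ha)
      have hmemnl : Ici (0:ℝ) ∈ 𝓝[≤] a :=
        mem_nhdsWithin_of_mem_nhds (Ici_mem_nhds ha')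
      have hba : b < Ginv a := by
        rcases eq_or_lt_of_le (hGinv_right a ha).1 with heq | hlt
        · exfalso
          have := (hGinv_right a ha).2
          rw [← heq, hGb] at this
          exact absurd this.symm (ne_of_gt ha')
        · exact hlt
      have hl : ContinuousWithinAt Ginv (Iic a) a := by
        apply hImono.continuousWithinAt_left_of_exists_between hmemnl
        intro v hv
        refine ⟨G (max b v), hGnonneg _ (le_max_left _ _), ?_, ?_⟩
        · rw [hGinv_left _ (le_max_left _ _)]
          exact le_max_right _ _
        · rw [hGinv_left _ (le_max_left _ _)]
          exact max_lt hba hv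
      exact (continuousAt_iff_continuous_left_right.2 ⟨hl, hr⟩).continuousWithinAt
  have hIderiv : ∀ a : ℝ, 0 ≤ a →
      HasDerivWithinAt Ginv (g (4 / Ginv a)) (Ici 0) a := by
    intro a ha
    obtain ⟨hxb, hGx⟩ := hGinv_right a ha
    have hc0 : f (Ginv a) ≠ 0 := ne_of_gt (hfpos _ hxb)
    have hslopeG : Tendsto (slope G (Ginv a)) (𝓝[Ici b \ {Ginv a}] (Ginv a))
        (𝓝 (f (Ginv a))) :=
      hasDerivWithinAt_iff_tendsto_slope.1 (hGd _ hxb)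
    have hItendsto : Tendsto Ginv (𝓝[Ici 0 \ {a}] a)
        (𝓝[Ici b \ {Ginv a}] (Ginv a)) := by
      rw [tendsto_nhdsWithin_iff]
      constructor
      · exact ((hIcont a ha).mono diff_subset).tendsto
      · filter_upwards [self_mem_nhdsWithin] with y hy
        refine ⟨(hGinv_right y hy.1).1, ?_⟩
        intro hcon
        apply hy.2
        have : y = G (Ginv y) := ((hGinv_right y hy.1).2).symm
        rw [this, hcon, hGx]
        rfl
      -- done
    have hT : Tendsto (fun y => (slope G (Ginv a) (Ginv y))⁻¹) (𝓝[Ici 0 \ {a}] a)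
        (𝓝 (f (Ginv a))⁻¹) := (hslopeG.comp hItendsto).inv₀ hc0
    rw [hasDerivWithinAt_iff_tendsto_slope]
    have hval : (f (Ginv a))⁻¹ = g (4 / Ginv a) := by simp [hfdef]
    rw [← hval]
    apply hT.congr'
    filter_upwards [self_mem_nhdsWithin] with y hy
    have hyb : b ≤ Ginv y := (hGinv_right y hy.1).1
    rw [slope_def_field, slope_def_field, (hGinv_right y hy.1).2, hGx, inv_div]
  -- the function u(t) = Ginv (4t)
  set u : ℝ → ℝ := fun t => Ginv (4 * t) with hudef
  have hut : ∀ t : ℝ, 0 ≤ t → b ≤ u t ∧ G (u t) = 4 * t := by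
    intro t ht; exact hGinv_right (4 * t) (by linarith)
  have hu0 : u 0 = b := by
    simp only [hudef, mul_zero]; exact hginv0
  have hupos : ∀ t : ℝ, 0 ≤ t → 0 < u t := fun t ht => lt_of_lt_of_le hb (hut t ht).1
  have huderiv : ∀ t : ℝ, 0 ≤ t → HasDerivWithinAt u (4 * g (4 / u t)) (Ici 0) t := by
    intro t ht
    have h4 : HasDerivWithinAt (fun t : ℝ => 4 * t) 4 (Ici 0) t := by
      simpa using ((hasDerivAt_id t).const_mul (4:ℝ)).hasDerivWithinAt
    have hmaps : MapsTo (fun t : ℝ => 4 * t) (Ici 0) (Ici 0) := by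
      intro y hy; simp only [mem_Ici] at hy ⊢; linarith
    have hcomp := (hIderiv (4 * t) (by linarith)).comp t h4 hmaps
    have : HasDerivWithinAt u (g (4 / Ginv (4 * t)) * 4) (Ici 0) t := hcomp
    convert this using 1
    simp only [hudef]; ring
  -- first derivative of h
  have hhd : ∀ t : ℝ, 0 ≤ t →
      HasDerivWithinAt h (g (4 / u t) * u t ^ (-(3:ℝ)/4)) (Ici 0) t := by
    intro t ht
    have hH : HasDerivWithinAt (fun t => u t ^ ((1:ℝ)/4))
        ((4 * g (4 / u t)) * ((1:ℝ)/4) * u t ^ ((1:ℝ)/4 - 1)) (Ici 0) t :=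
      (huderiv t ht).rpow_const (Or.inl (ne_of_gt (hupos t ht)))
    have heq : ∀ x ∈ Ici (0:ℝ), h x = u x ^ ((1:ℝ)/4) := by
      intro x hx; rw [hdef x hx]
    have hres := hH.congr heq (heq t ht)
    refine hres.congr_deriv ?_
    rw [show (1:ℝ)/4 - 1 = -(3:ℝ)/4 by norm_num]
    ring
  have hd1 : ∀ t : ℝ, 0 ≤ t →
      derivWithin h (Ici 0) t = g (4 / u t) * u t ^ (-(3:ℝ)/4) := fun t ht =>
    (hhd t ht).derivWithin (uniqueDiffOn_Ici 0 t ht)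
  -- second derivative
  set gd : ℝ → ℝ := fun w => derivWithin g (Icc 0 z₀) w with hgddef
  have hgdiff : ∀ w ∈ Icc (0:ℝ) z₀, HasDerivWithinAt g (gd w) (Icc 0 z₀) w := by
    intro w hw
    exact ((hsmooth.differentiableOn (by simp)) w hw).hasDerivWithinAt
  have hzmaps : MapsTo (fun t : ℝ => 4 / u t) (Ici 0) (Icc 0 z₀) := by
    intro t ht; exact hmemIcc (u t) (hut t ht).1
  have hphid : ∀ t : ℝ, 0 ≤ t →
      HasDerivWithinAt (fun t => g (4 / u t) * u t ^ (-(3:ℝ)/4))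
        (gd (4 / u t) * (-16 * g (4 / u t) / u t ^ 2) * u t ^ (-(3:ℝ)/4)
          + g (4 / u t) * (-3 * g (4 / u t) * u t ^ (-(3:ℝ)/4 - 1))) (Ici 0) t := by
    intro t ht
    have hu := huderiv t ht
    have hune : u t ≠ 0 := ne_of_gt (hupos t ht)
    have hz : HasDerivWithinAt (fun t => 4 / u t)
        ((0 * u t - 4 * (4 * g (4 / u t))) / u t ^ 2) (Ici 0) t :=
      (hasDerivWithinAt_const t (Ici 0) (4:ℝ)).div hu hune
    have hA : HasDerivWithinAt (fun t => g (4 / u t))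
        (gd (4 / u t) * ((0 * u t - 4 * (4 * g (4 / u t))) / u t ^ 2)) (Ici 0) t :=
      (hgdiff _ (hzmaps ht)).comp t hz hzmaps
    have hw : HasDerivWithinAt (fun t => u t ^ (-(3:ℝ)/4))
        ((4 * g (4 / u t)) * (-(3:ℝ)/4) * u t ^ (-(3:ℝ)/4 - 1)) (Ici 0) t :=
      hu.rpow_const (Or.inl hune)
    have hres := hA.mul hw
    refine hres.congr_deriv ?_
    field_simp
    ring
  have hd2 : ∀ t : ℝ, 0 ≤ t →
      derivWithin (derivWithin h (Ici 0)) (Ici 0) t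
        = gd (4 / u t) * (-16 * g (4 / u t) / u t ^ 2) * u t ^ (-(3:ℝ)/4)
          + g (4 / u t) * (-3 * g (4 / u t) * u t ^ (-(3:ℝ)/4 - 1)) := by
    intro t ht
    have hres := (hphid t ht).congr (fun x hx => hd1 x hx) (hd1 t ht)
    exact hres.derivWithin (uniqueDiffOn_Ici 0 t ht)
  -- the combined expression
  set P : ℝ → ℝ := fun t => (u t ^ ((1:ℝ)/4)) ^ 3 *
      ((gd (4 / u t) * (-16 * g (4 / u t) / u t ^ 2) * u t ^ (-(3:ℝ)/4)
          + g (4 / u t) * (-3 * g (4 / u t) * u t ^ (-(3:ℝ)/4 - 1)))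
        + g (4 / u t) * u t ^ (-(3:ℝ)/4)) with hPdef
  have hgoal_eq : ∀ t : ℝ, 0 ≤ t →
      h t ^ 3 * (derivWithin (derivWithin h (Ici 0)) (Ici 0) t
        + derivWithin h (Ici 0) t) = P t := by
    intro t ht
    rw [hd2 t ht, hd1 t ht, hdef t ht, hPdef]
  have hPval : ∀ t : ℝ, 0 < t → P t = 1 := by
    intro t ht
    have hU := hupos t ht.le
    have hUb : b < u t := by
      rcases eq_or_lt_of_le (hut t ht.le).1 with heq | hlt
      · exfalso
        have hGu := (hut t ht.le).2
        rw [← heq, hGb] at hGu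
        linarith
      · exact hlt
    have hZ : 4 / u t ∈ Ioo 0 z₀ :=
      ⟨by positivity, div_lt_div_of_pos_left (by norm_num) hb hUb⟩
    have hgd_eq : gd (4 / u t) = deriv g (4 / u t) := by
      simp only [hgddef]
      exact derivWithin_of_mem_nhds (Icc_mem_nhds hZ.1 hZ.2)
    have hsolZ := hsol (4 / u t) ⟨hZ.1, hZ.2.le⟩
    have a1 : (u t ^ ((1:ℝ)/4)) ^ 3 = u t ^ ((3:ℝ)/4) := by
      rw [← Real.rpow_natCast (u t ^ ((1:ℝ)/4)) 3, ← Real.rpow_mul hU.le]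
      norm_num
    have e1 : u t ^ ((3:ℝ)/4) * u t ^ (-(3:ℝ)/4) = 1 := by
      rw [← Real.rpow_add hU]
      norm_num
    have e2 : u t ^ ((3:ℝ)/4) * u t ^ (-(3:ℝ)/4 - 1) = (u t)⁻¹ := by
      rw [← Real.rpow_add hU, show (3:ℝ)/4 + (-(3:ℝ)/4 - 1) = -1 by norm_num,
        Real.rpow_neg hU.le, Real.rpow_one]
    have hune : u t ≠ 0 := ne_of_gt hU
    rw [hPdef]
    simp only
    rw [hgd_eq, a1]
    linear_combination (deriv g (4 / u t) * (-16 * g (4 / u t) / u t ^ 2)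
        + g (4 / u t)) * e1 + (-3 * g (4 / u t) ^ 2) * e2 + hsolZ
  -- continuity of P at 0 from the right
  have hPc : ContinuousWithinAt P (Ici 0) 0 := by
    have hUc : ContinuousWithinAt u (Ici 0) 0 := (huderiv 0 le_rfl).continuousWithinAt
    have hune : u 0 ≠ 0 := ne_of_gt (hupos 0 le_rfl)
    have hZc : ContinuousWithinAt (fun t => 4 / u t) (Ici 0) 0 :=
      continuousWithinAt_const.div hUc hune
    have hgZ : ContinuousWithinAt (fun t => g (4 / u t)) (Ici 0) 0 :=
      ContinuousWithinAt.comp (f := fun t => 4 / u t) (g := g)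
        (hsmooth.continuousOn _ (hzmaps self_mem_Ici)) hZc hzmaps
    have hgdc : ContinuousOn gd (Icc 0 z₀) :=
      hsmooth.continuousOn_derivWithin (uniqueDiffOn_Icc hz₀) (by simp)
    have hgdZ : ContinuousWithinAt (fun t => gd (4 / u t)) (Ici 0) 0 :=
      ContinuousWithinAt.comp (f := fun t => 4 / u t) (g := gd)
        (hgdc _ (hzmaps self_mem_Ici)) hZc hzmaps
    have hr1 : ContinuousWithinAt (fun t => u t ^ (-(3:ℝ)/4)) (Ici 0) 0 :=
      hUc.rpow_const (Or.inl hune)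
    have hr2 : ContinuousWithinAt (fun t => u t ^ (-(3:ℝ)/4 - 1)) (Ici 0) 0 :=
      hUc.rpow_const (Or.inl hune)
    have hr3 : ContinuousWithinAt (fun t => u t ^ ((1:ℝ)/4)) (Ici 0) 0 :=
      hUc.rpow_const (Or.inl hune)
    rw [hPdef]
    exact (hr3.pow 3).mul
      ((((hgdZ.mul ((continuousWithinAt_const.mul hgZ).div (hUc.pow 2)
          (pow_ne_zero 2 hune))).mul hr1).add
        (hgZ.mul ((continuousWithinAt_const.mul hgZ).mul hr2))).add
        (hgZ.mul hr1))
  have hP0 : P 0 = 1 := by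
    have h1 : Tendsto P (𝓝[Ici 0] 0) (𝓝 (P 0)) := hPc.tendsto
    have h2 : Tendsto P (𝓝[Ioi 0] 0) (𝓝 (P 0)) :=
      h1.mono_left (nhdsWithin_mono 0 Ioi_subset_Ici_self)
    have h3 : Tendsto P (𝓝[Ioi 0] 0) (𝓝 1) := by
      apply Tendsto.congr' _ tendsto_const_nhds
      filter_upwards [self_mem_nhdsWithin] with t ht
      exact (hPval t ht).symm
    exact tendsto_nhds_unique h2 h3
  refine ⟨?_, ?_, ?_⟩
  · intro t ht
    rw [hgoal_eq t ht]
    rcases eq_or_lt_of_le (mem_Ici.1 ht) with heq | hlt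
    · rw [← heq]; exact hP0
    · exact hPval t hlt
  · rw [hdef 0 le_rfl, mul_zero, hginv0, hbdef, ← Real.rpow_natCast h₀ 4,
      ← Real.rpow_mul hh₀.le]
    norm_num
  · rw [hd1 0 le_rfl, hu0]
    have h4b : (4:ℝ) / b = z₀ := by rw [hbdef, hz₀def]
    have hb34 : (b:ℝ) ^ (-(3:ℝ)/4) = (h₀ ^ 3)⁻¹ := by
      rw [hbdef, ← Real.rpow_natCast h₀ 4, ← Real.rpow_mul hh₀.le,
        show ((4:ℕ):ℝ) * (-(3:ℝ)/4) = -(3:ℝ) by norm_num,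
        Real.rpow_neg hh₀.le, show (3:ℝ) = ((3:ℕ):ℝ) by norm_num,
        Real.rpow_natCast]
    rw [h4b, hinit, hb34]
    field_simp
end

section
/- Define polynomials p̃_k(z) by p̃₀(z) = z and p̃_{k+1}(z) = σ⁰_{k+1}(p̃₀(z),…,p̃_k(z)), where σ⁰_k(a₁,…,a_k) = Σ_{j=1}^k ((−1)^{j+1}/j) s_{j,k}(a₁,…,a_k) and s_{j,k}(a₁,…,a_k) = Σ_{i₁+⋯+i_j=k} a_{i₁}⋯a_{i_j}. Then for every n ≥ 0, −W₋₁(−e^{−x}) = x + Σ_{k=0}^n p̃_k(ln x)/x^k + O((ln x / x)^{n+1}) as x → +∞, where y = −W₋₁(−e^{−x}) is the unique solution of y − ln y = x with y > 1 (for x > 1). -/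
/-! Put `t_i = p̃_{i-1}(ln x) / x^i` and `t = t_1 + ⋯ + t_{n+1}`, so that the approximation is
`F = x (1 + t)`, with `t = O(ln x / x)` because `p̃_k(z) = O(z^{k+1})`. Then
`F - ln F - x = ∑_{k=1}^n p̃_k(ln x) / x^k - ln (1 + t)`. Expand `ln (1 + t)` to order `n + 1`
and `t^j = ∑_k s_{j,k}(t_1, t_2, …)`; by homogeneity of `s_{j,k}` the coefficient of `x^{-k}`
is `σ⁰_k(p̃_0, …, p̃_{k-1})(ln x) = p̃_k(ln x)` for `k ≤ n + 1`, which is exactly the recursion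
defining `p̃`, while every term with `k > n` is `O((ln x / x)^{n+1})`. So
`F - ln F - x = O((ln x / x)^{n+1})`, and since `u ↦ u - ln u` has slope at least `1/2` on
`[2, ∞)`, also `y - F = O((ln x / x)^{n+1})`. The case `n = 0` gives `y - x = O(ln x)`. -/

open Set Filter Finset

/-- `sP a j k` is the polynomial `s_{j,k}(a₁,…,a_k) = Σ_{i₁+⋯+i_j=k} a_{i₁}⋯a_{i_j}`
(sum over positive indices), defined via the recursion
`s_{0,k} = δ_{0,k}`, `s_{m+1,k} = Σ_{j<k} s_{m,j} a_{k−j}`. -/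
def sP (a : ℕ → ℝ) : ℕ → ℕ → ℝ
  | 0, k => if k = 0 then 1 else 0
  | m + 1, k => ∑ j ∈ Finset.range k, sP a m j * a (k - j)

/-- `σ⁰_k(a₁,…,a_k) = Σ_{j=1}^k ((−1)^{j+1}/j) s_{j,k}(a₁,…,a_k)`. -/
noncomputable def sigma0 (a : ℕ → ℝ) (k : ℕ) : ℝ :=
  ∑ j ∈ Finset.Icc 1 k, ((-1 : ℝ) ^ (j + 1) / j) * sP a j k

/-- The polynomials (as functions of `z`) `p̃₀(z) = z`,
`p̃_{k+1}(z) = σ⁰_{k+1}(p̃₀(z),…,p̃_k(z))`. -/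
noncomputable def ptilde : ℕ → ℝ → ℝ
  | 0 => fun z => z
  | k + 1 => fun z =>
      sigma0 (fun i => if h : i - 1 < k + 1 then ptilde (i - 1) z else 0) (k + 1)
  decreasing_by exact h

open Asymptotics Topology

theorem sum_Icc_one_eq_sum_range {M : Type*} [AddCommMonoid M] (g : ℕ → M) (n : ℕ) :
    ∑ j ∈ Finset.Icc 1 n, g j = ∑ i ∈ range n, g (i + 1) := by
  rw [range_eq_Ico, sum_Ico_add' g, zero_add, Finset.Ico_add_one_right_eq_Icc]

section sP

variable (a : ℕ → ℝ)

theorem sP_congr {b : ℕ → ℝ} {K : ℕ} (hab : ∀ i ∈ Finset.Icc 1 K, a i = b i) (m : ℕ) :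
    ∀ k ≤ K, sP a m k = sP b m k := by
  induction m with
  | zero => intro k _; rfl
  | succ m ih =>
    intro k hk
    refine sum_congr rfl fun j hj => ?_
    have hj := mem_range.1 hj
    rw [ih j (by omega), hab (k - j) (Finset.mem_Icc.2 ⟨by omega, by omega⟩)]

theorem sP_eq_zero_of_lt {m k : ℕ} (h : k < m) : sP a m k = 0 := by
  induction m generalizing k with
  | zero => omega
  | succ m ih =>
    exact sum_eq_zero fun j hj => by rw [ih (by have := mem_range.1 hj; omega), zero_mul]

theorem sP_div_pow (X : ℝ) (m k : ℕ) : sP (fun i => a i / X ^ i) m k = sP a m k / X ^ k := by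
  induction m generalizing k with
  | zero => by_cases hk : k = 0 <;> simp [sP, hk]
  | succ m ih =>
    simp only [sP, ih, sum_div]
    refine sum_congr rfl fun j hj => ?_
    rw [div_mul_div_comm, ← pow_add, Nat.add_sub_of_le (mem_range.1 hj).le]

theorem sigma0_congr {b : ℕ → ℝ} {K : ℕ} (hab : ∀ i ∈ Finset.Icc 1 K, a i = b i) {k : ℕ}
    (hk : k ≤ K) : sigma0 a k = sigma0 b k :=
  sum_congr rfl fun j _ => by rw [sP_congr a hab j k hk]

theorem sum_Icc_mul_sP_eq_sigma0 {k L : ℕ} (hk : k ≤ L) :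
    ∑ j ∈ Finset.Icc 1 L, (-1 : ℝ) ^ (j + 1) / j * sP a j k = sigma0 a k := by
  refine (sum_subset (Icc_subset_Icc_right hk) fun j hj hjk => ?_).symm
  rw [Finset.mem_Icc] at hj hjk
  rw [sP_eq_zero_of_lt a (by omega), mul_zero]

open Polynomial in
theorem coeff_pow_sum_monomial_eq_sP {K : ℕ} (ha : ∀ i, K < i → a i = 0) (m k : ℕ) :
    ((∑ i ∈ Finset.Icc 1 K, C (a i) * X ^ i) ^ m).coeff k = sP a m k := by
  set P : ℝ[X] := ∑ i ∈ Finset.Icc 1 K, C (a i) * X ^ i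
  have hP : ∀ q, P.coeff q = if q = 0 then 0 else a q := by
    intro q
    simp only [P, finsetSum_coeff, coeff_C_mul_X_pow, sum_ite_eq, Finset.mem_Icc]
    split_ifs <;> first | rfl | omega | exact (ha q (by omega)).symm
  induction m generalizing k with
  | zero => simp [sP, coeff_one]
  | succ m ih =>
    rw [pow_succ, coeff_mul, Nat.sum_antidiagonal_eq_sum_range_succ
      (fun i j => (P ^ m).coeff i * P.coeff j), sum_range_succ]
    simp only [hP, ih, Nat.sub_self, if_true, mul_zero, add_zero, sP]
    exact sum_congr rfl fun j hj => by rw [if_neg (by have := mem_range.1 hj; omega)]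

open Polynomial in
theorem sum_pow_eq_sum_sP {K : ℕ} (ha : ∀ i, K < i → a i = 0) {m M : ℕ} (hM : m * K < M) :
    (∑ i ∈ Finset.Icc 1 K, a i) ^ m = ∑ k ∈ range M, sP a m k := by
  have hdeg : ((∑ i ∈ Finset.Icc 1 K, C (a i) * X ^ i) ^ m).natDegree < M :=
    natDegree_pow_le.trans_lt <| (Nat.mul_le_mul_left m <| natDegree_sum_le_of_forall_le _ _
      fun i hi => (natDegree_C_mul_X_pow_le _ _).trans (Finset.mem_Icc.1 hi).2).trans_lt hM
  simpa [eval_finsetSum, coeff_pow_sum_monomial_eq_sP a ha] using eval_eq_sum_range' hdeg 1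

end sP

theorem isBigO_sP {α : Type*} {l : Filter α} {b : ℕ → α → ℝ} {u : α → ℝ} {K : ℕ}
    (hb : ∀ i ∈ Finset.Icc 1 K, b i =O[l] fun x => u x ^ i) (m : ℕ) :
    ∀ k ≤ K, (fun x => sP (fun i => b i x) m k) =O[l] fun x => u x ^ k := by
  induction m with
  | zero =>
    intro k _
    by_cases hk : k = 0
    · subst hk; simpa [sP] using isBigO_refl (fun _ => (1 : ℝ)) l
    · simpa [sP, hk] using isBigO_zero (fun x => u x ^ k) l
  | succ m ih =>
    intro k hk
    refine IsBigO.fun_sum fun j hj => ?_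
    have hj := mem_range.1 hj
    have hkj := hb (k - j) (Finset.mem_Icc.2 ⟨by omega, by omega⟩)
    refine ((ih j (by omega)).mul hkj).congr_right fun x => ?_
    rw [← pow_add, Nat.add_sub_of_le hj.le]

theorem isBigO_pow_pow_of_tendsto_zero {α : Type*} {l : Filter α} {u : α → ℝ}
    (hu : Tendsto u l (𝓝 0)) {m n : ℕ} (h : m ≤ n) :
    (fun x => u x ^ n) =O[l] fun x => u x ^ m := by
  rcases h.eq_or_lt with rfl | h
  · exact isBigO_refl _ _
  · exact ((isLittleO_pow_pow h).comp_tendsto hu).isBigO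

theorem isBigO_log_one_add_sub_sum (N : ℕ) :
    (fun t : ℝ => Real.log (1 + t) - ∑ j ∈ Finset.Icc 1 N, (-1 : ℝ) ^ (j + 1) / j * t ^ j)
      =O[𝓝 0] fun t => t ^ (N + 1) := by
  refine IsBigO.of_bound 2 ?_
  filter_upwards [Metric.ball_mem_nhds (0 : ℝ) (by norm_num : (0 : ℝ) < 1 / 2)] with t ht
  rw [Metric.mem_ball, dist_zero_right, Real.norm_eq_abs] at ht
  have hsum : ∑ i ∈ range N, (-t) ^ (i + 1) / (i + 1)
      = -∑ j ∈ Finset.Icc 1 N, (-1 : ℝ) ^ (j + 1) / j * t ^ j := by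
    rw [sum_Icc_one_eq_sum_range, ← sum_neg_distrib]
    refine sum_congr rfl fun i _ => ?_
    rw [neg_pow]; push_cast; ring
  have key := Real.abs_log_sub_add_sum_range_le (x := -t) (by rw [abs_neg]; linarith) N
  rw [hsum, sub_neg_eq_add, abs_neg, neg_add_eq_sub] at key
  rw [Real.norm_eq_abs, norm_pow, Real.norm_eq_abs]
  refine key.trans ((div_le_iff₀ (by linarith)).2 ?_)
  nlinarith [pow_nonneg (abs_nonneg t) (N + 1)]

theorem sub_le_two_mul_sub_log_sub {u v : ℝ} (hv : 2 ≤ v) (h : v ≤ u) :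
    u - v ≤ 2 * ((u - Real.log u) - (v - Real.log v)) := by
  have hlog : Real.log u - Real.log v ≤ (u - v) / v := by
    rw [← Real.log_div (by linarith) (by linarith)]
    exact (Real.log_le_sub_one_of_pos (div_pos (by linarith) (by linarith))).trans_eq
      (by field_simp)
  have : (u - v) / v ≤ (u - v) / 2 := div_le_div_of_nonneg_left (by linarith) (by norm_num) hv
  linarith

theorem abs_sub_le_two_mul_abs_sub_log_sub {u v : ℝ} (hu : 2 ≤ u) (hv : 2 ≤ v) :
    |u - v| ≤ 2 * |(u - Real.log u) - (v - Real.log v)| := by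
  wlog h : v ≤ u generalizing u v
  · rw [abs_sub_comm, abs_sub_comm (u - _)]
    exact this hv hu (by linarith)
  have := sub_le_two_mul_sub_log_sub hv h
  rw [abs_of_nonneg (by linarith), abs_of_nonneg (by linarith)]
  exact this

theorem ptilde_zero (z : ℝ) : ptilde 0 z = z := by
  rw [ptilde]

theorem ptilde_succ (k : ℕ) (z : ℝ) :
    ptilde (k + 1) z = sigma0 (fun i => ptilde (i - 1) z) (k + 1) := by
  rw [ptilde]
  exact sigma0_congr _ (fun i hi => dif_pos (by rw [Finset.mem_Icc] at hi; omega)) le_rfl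

theorem sigma0_ptilde_div_pow (z X : ℝ) {k : ℕ} (hk : 1 ≤ k) :
    sigma0 (fun i => ptilde (i - 1) z / X ^ i) k = ptilde k z / X ^ k := by
  obtain ⟨k, rfl⟩ := Nat.exists_eq_add_of_le' hk
  rw [ptilde_succ, sigma0, sigma0, sum_div]
  exact sum_congr rfl fun j _ => by rw [sP_div_pow, mul_div_assoc]

theorem isBigO_ptilde_atTop (k : ℕ) : ptilde k =O[atTop] fun z => z ^ (k + 1) := by
  induction k using Nat.strong_induction_on with
  | _ k ih =>
  cases k with
  | zero => simpa [funext ptilde_zero] using isBigO_refl (fun z : ℝ => z) atTop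
  | succ k =>
    have hsP := isBigO_sP (b := fun i z => ptilde (i - 1) z) (u := id) (K := k + 1)
      fun i hi => by
        rw [Finset.mem_Icc] at hi
        simpa [Nat.sub_add_cancel hi.1] using ih (i - 1) (by omega)
    have hsigma : ptilde (k + 1) =O[atTop] fun z => z ^ (k + 1) := by
      rw [funext (ptilde_succ k)]
      exact IsBigO.fun_sum fun j _ => (hsP j (k + 1) le_rfl).const_mul_left _
    exact hsigma.trans (isLittleO_pow_pow_atTop_of_lt (by omega)).isBigO

noncomputable def wApprox (n : ℕ) (x : ℝ) : ℝ :=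
  x + ∑ k ∈ range (n + 1), ptilde k (Real.log x) / x ^ k

/-- The `i`-th term of `wApprox n x / x - 1`, cut off at `i = n + 1` so that the powers of
`wSum n x` are polynomials in `1 / x`. -/
noncomputable def wTerm (n : ℕ) (x : ℝ) (i : ℕ) : ℝ :=
  if i ≤ n + 1 then ptilde (i - 1) (Real.log x) / x ^ i else 0

noncomputable def wSum (n : ℕ) (x : ℝ) : ℝ :=
  ∑ i ∈ Finset.Icc 1 (n + 1), wTerm n x i

/-- The coefficient of `x ^ (-k)` in the truncated logarithm series
`∑ j ∈ Icc 1 (n + 1), (-1) ^ (j + 1) / j * wSum n x ^ j`. -/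
noncomputable def logCoeff (n : ℕ) (x : ℝ) (k : ℕ) : ℝ :=
  ∑ j ∈ Finset.Icc 1 (n + 1), (-1 : ℝ) ^ (j + 1) / j * sP (wTerm n x) j k

theorem wApprox_eq_mul (n : ℕ) {x : ℝ} (hx : x ≠ 0) :
    wApprox n x = x * (1 + wSum n x) := by
  rw [wApprox, wSum, sum_Icc_one_eq_sum_range, mul_add, mul_one, mul_sum]
  congr 1
  refine sum_congr rfl fun k hk => ?_
  rw [wTerm, if_pos (by have := mem_range.1 hk; omega), Nat.add_sub_cancel, pow_succ]
  field_simp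

theorem logCoeff_eq {n k : ℕ} (x : ℝ) (hk1 : 1 ≤ k) (hkn : k ≤ n + 1) :
    logCoeff n x k = ptilde k (Real.log x) / x ^ k := by
  rw [logCoeff, sum_Icc_mul_sP_eq_sigma0 _ hkn, ← sigma0_ptilde_div_pow _ _ hk1]
  exact sigma0_congr _ (fun i hi => if_pos ((Finset.mem_Icc.1 hi).2.trans hkn)) le_rfl

theorem sum_range_logCoeff (n : ℕ) (x : ℝ) :
    ∑ k ∈ range (n + 1), logCoeff n x k = wApprox n x - x - Real.log x := by
  have h0 : logCoeff n x 0 = 0 :=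
    sum_eq_zero fun j hj => by rw [sP_eq_zero_of_lt _ (Finset.mem_Icc.1 hj).1, mul_zero]
  rw [wApprox, sum_range_succ', sum_range_succ' _ n, h0, ptilde_zero, pow_zero, div_one,
    sum_congr rfl fun k hk => logCoeff_eq x k.succ_pos (by have := mem_range.1 hk; omega)]
  ring

theorem sum_log_series_eq_sum_logCoeff (n : ℕ) (x : ℝ) :
    ∑ j ∈ Finset.Icc 1 (n + 1), (-1 : ℝ) ^ (j + 1) / j * wSum n x ^ j
      = ∑ k ∈ range ((n + 1) * (n + 1) + 1), logCoeff n x k := by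
  have hsupp : ∀ i, n + 1 < i → wTerm n x i = 0 := fun i hi => if_neg (by omega)
  simp only [logCoeff, wSum]
  rw [sum_comm]
  refine sum_congr rfl fun j hj => ?_
  rw [sum_pow_eq_sum_sP _ hsupp (Nat.lt_succ_of_le
    (Nat.mul_le_mul_right _ (Finset.mem_Icc.1 hj).2)), mul_sum]

theorem isBigO_wTerm (n : ℕ) {i : ℕ} (hi : 1 ≤ i) :
    (fun x => wTerm n x i) =O[atTop] fun x => (Real.log x / x) ^ i := by
  by_cases hin : i ≤ n + 1
  · have := ((isBigO_ptilde_atTop (i - 1)).comp_tendsto Real.tendsto_log_atTop).mul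
      (isBigO_refl (fun x : ℝ => (x ^ i)⁻¹) atTop)
    refine this.congr (fun x => ?_) (fun x => ?_)
    · simp [wTerm, hin, div_eq_mul_inv]
    · simp [Nat.sub_add_cancel hi, div_eq_mul_inv, mul_pow]
  · simpa [wTerm, hin] using isBigO_zero (fun x : ℝ => (Real.log x / x) ^ i) atTop

theorem isBigO_logCoeff (n k : ℕ) :
    (fun x => logCoeff n x k) =O[atTop] fun x => (Real.log x / x) ^ k :=
  IsBigO.fun_sum fun j _ => (isBigO_sP (fun _ hi => isBigO_wTerm n (Finset.mem_Icc.1 hi).1)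
    j k le_rfl).const_mul_left _

theorem tendsto_log_div_self_atTop : Tendsto (fun x => Real.log x / x) atTop (𝓝 0) :=
  Real.isLittleO_log_id_atTop.tendsto_div_nhds_zero

theorem isBigO_wSum (n : ℕ) :
    (fun x => wSum n x) =O[atTop] fun x => Real.log x / x :=
  IsBigO.fun_sum fun i hi => by
    simpa using (isBigO_wTerm n (Finset.mem_Icc.1 hi).1).trans
      (isBigO_pow_pow_of_tendsto_zero tendsto_log_div_self_atTop (Finset.mem_Icc.1 hi).1)

theorem tendsto_wSum (n : ℕ) :
    Tendsto (fun x => wSum n x) atTop (𝓝 0) :=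
  (isBigO_wSum n).trans_tendsto tendsto_log_div_self_atTop

theorem wApprox_sub_log_sub_eq (n : ℕ) {x : ℝ} (hx : 0 < x) (ht : 0 < 1 + wSum n x) :
    wApprox n x - Real.log (wApprox n x) - x
      = -(Real.log (1 + wSum n x)
          - ∑ j ∈ Finset.Icc 1 (n + 1), (-1 : ℝ) ^ (j + 1) / j * wSum n x ^ j)
        - ∑ k ∈ Ico (n + 1) ((n + 1) * (n + 1) + 1), logCoeff n x k := by
  have hlog : Real.log (wApprox n x) = Real.log x + Real.log (1 + wSum n x) := by
    rw [wApprox_eq_mul n hx.ne', Real.log_mul hx.ne' ht.ne']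
  rw [sum_log_series_eq_sum_logCoeff,
    ← sum_range_add_sum_Ico _ (show n + 1 ≤ (n + 1) * (n + 1) + 1 by nlinarith),
    sum_range_logCoeff, hlog]
  ring

theorem isBigO_wApprox_sub_log_sub (n : ℕ) :
    (fun x => wApprox n x - Real.log (wApprox n x) - x) =O[atTop]
      fun x => (Real.log x / x) ^ (n + 1) := by
  have hu := tendsto_log_div_self_atTop
  have hseries := (((isBigO_log_one_add_sub_sum (n + 1)).comp_tendsto (tendsto_wSum n)).trans
    ((isBigO_wSum n).pow (n + 2))).trans (isBigO_pow_pow_of_tendsto_zero hu (Nat.le_succ _))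
  have htail : (fun x => ∑ k ∈ Ico (n + 1) ((n + 1) * (n + 1) + 1), logCoeff n x k) =O[atTop]
      fun x => (Real.log x / x) ^ (n + 1) := IsBigO.fun_sum fun k hk =>
    (isBigO_logCoeff n k).trans (isBigO_pow_pow_of_tendsto_zero hu (Finset.mem_Ico.1 hk).1)
  refine (hseries.neg_left.sub htail).congr' ?_ EventuallyEq.rfl
  filter_upwards [eventually_gt_atTop 0,
    (tendsto_wSum n).eventually (lt_mem_nhds (show (-1 : ℝ) < 0 by norm_num))] with x hx ht
  exact (wApprox_sub_log_sub_eq n hx (by linarith)).symm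

theorem isBigO_sub_wApprox (y : ℝ → ℝ)
    (hy : ∀ x : ℝ, 1 < x → 1 < y x ∧ y x - Real.log (y x) = x) (n : ℕ) :
    (fun x => y x - wApprox n x) =O[atTop] fun x => (Real.log x / x) ^ (n + 1) := by
  refine (IsBigO.of_bound 2 ?_).trans (isBigO_wApprox_sub_log_sub n)
  filter_upwards [eventually_ge_atTop 4,
    (tendsto_wSum n).eventually (lt_mem_nhds (show (-1 / 2 : ℝ) < 0 by norm_num))] with x hx ht
  obtain ⟨hy1, hyx⟩ := hy x (by linarith)
  have hy2 : 2 ≤ y x := by linarith [Real.log_pos hy1]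
  have hA : 2 ≤ wApprox n x := by rw [wApprox_eq_mul n (by positivity)]; nlinarith
  have := abs_sub_le_two_mul_abs_sub_log_sub hy2 hA
  rwa [hyx, abs_sub_comm x] at this

/-- For every `n ≥ 0`, the solution `y(x) = −W₋₁(−e^{−x})` of `y − ln y = x` with
`y > 1` satisfies `y(x) = x + Σ_{k=0}^n p̃_k(ln x)/x^k + O((ln x/x)^{n+1})` as
`x → +∞` (and in particular `y(x) = x + O(ln x)`). -/
theorem stmt_19 (y : ℝ → ℝ)
    (hy : ∀ x : ℝ, 1 < x → 1 < y x ∧ y x - Real.log (y x) = x) :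
    ((fun x : ℝ => y x - x) =O[atTop] Real.log) ∧
    ∀ n : ℕ,
      (fun x : ℝ => y x - (x + ∑ k ∈ range (n + 1), ptilde k (Real.log x) / x ^ k))
        =O[atTop] (fun x : ℝ => (Real.log x / x) ^ (n + 1)) := by
  refine ⟨?_, isBigO_sub_wApprox y hy⟩
  have hlog : (fun x => (Real.log x / x) ^ (0 + 1)) =O[atTop] Real.log := by
    refine IsBigO.of_bound 1 ?_
    filter_upwards [eventually_ge_atTop 1] with x hx
    rw [pow_one, norm_div, one_mul, Real.norm_of_nonneg (show (0 : ℝ) ≤ x by linarith)]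
    exact div_le_self (norm_nonneg _) hx
  refine (((isBigO_sub_wApprox y hy 0).trans hlog).add (isBigO_refl _ _)).congr_left fun x => ?_
  simp only [wApprox, zero_add, range_one, sum_singleton, ptilde_zero, pow_zero, div_one]
  ring
end
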